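/- arXiv:2503.15824 — 5 statements merged into one kernel-verified Lean document; each statement's English description precedes it below -/
import Mathlib

section
/- (Theorem 3.3(ii)) Assume ρ < 1, let ε ∈ (ε_min, ε_max), write δ* := δ*(ε), and let 0 ≤ δ < δ*. Then for every q ∈ M_ε(μ,σ) one has J_δ(q) ≤ μ − δ(ε_min + 2σσ_F) + (σ/σ_{δ*})(σ₀² + 2(δ + δ*)σ₀σ_Fρ + 4δδ*σ_F²), with equality if and only if q = q_{δ*} almost everywhere; hence q_{δ*} is the unique (up to a.e. equality) maximizer of J_δ over M_ε(μ,σ), and it satisfies d²(q_F, q_{δ*}) = ε. -/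
open MeasureTheory Set Filter

noncomputable section

/-- Integral over the interval (0,1) with Lebesgue measure. -/
def intI (f : ℝ → ℝ) : ℝ := ∫ u in Ioo (0:ℝ) 1, f u

/-- Square integrability on (0,1). -/
def SqInt (f : ℝ → ℝ) : Prop :=
  IntegrableOn f (Ioo (0:ℝ) 1) volume ∧ IntegrableOn (fun u => f u ^ 2) (Ioo (0:ℝ) 1) volume

/-- A quantile function: nondecreasing and square-integrable on (0,1). -/
def IsQuantile (q : ℝ → ℝ) : Prop := MonotoneOn q (Ioo (0:ℝ) 1) ∧ SqInt q

/-- Membership in `M(μ,σ)` : quantile function with prescribed first two moments. -/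
def MemM (μ σ : ℝ) (q : ℝ → ℝ) : Prop :=
  IsQuantile q ∧ intI q = μ ∧ intI (fun u => q u ^ 2) = μ ^ 2 + σ ^ 2

/-- Squared Wasserstein distance between (quantile) functions on (0,1). -/
def W2 (p q : ℝ → ℝ) : ℝ := intI (fun u => (p u - q u) ^ 2)

/-- Almost-everywhere equality on (0,1). -/
def AeEqI (f g : ℝ → ℝ) : Prop := f =ᵐ[(volume : Measure ℝ).restrict (Ioo (0:ℝ) 1)] g

/-- The penalized objective `J_δ(q) = ∫ γ q − δ d²(q_F, q)`. -/
def Jpen (γ qF : ℝ → ℝ) (δ : ℝ) (q : ℝ → ℝ) : ℝ :=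
  intI (fun u => γ u * q u) - δ * W2 qF q

/-- `σ_δ = sqrt(σ₀² + 4δ²σ_F² + 4δσ₀σ_Fρ)`. -/
def sigD (σ0 σF ρ δ : ℝ) : ℝ := Real.sqrt (σ0 ^ 2 + 4 * δ ^ 2 * σF ^ 2 + 4 * δ * σ0 * σF * ρ)

/-- The candidate optimizer `q_δ(u) = μ − (σ/σ_δ) μ_δ + (σ/σ_δ)(γ(u) + 2δ q_F(u))`,
where `μ_δ = 1 + 2δμ_F`. -/
def qD (μ σ μF σ0 σF ρ δ : ℝ) (γ qF : ℝ → ℝ) : ℝ → ℝ := fun u =>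
  μ - σ / sigD σ0 σF ρ δ * (1 + 2 * δ * μF) + σ / sigD σ0 σF ρ δ * (γ u + 2 * δ * qF u)

namespace Stmt10

/-- Lebesgue measure restricted to `(0,1)`. -/
def nu : Measure ℝ := (volume : Measure ℝ).restrict (Ioo (0:ℝ) 1)

instance : IsProbabilityMeasure nu :=
  ⟨by simp [nu, Measure.restrict_apply_univ, Real.volume_Ioo]⟩

lemma intI_eq (f : ℝ → ℝ) : intI f = ∫ u, f u ∂nu := rfl

/-- Product of two square-integrable functions is integrable. -/
lemma mul_int {f g : ℝ → ℝ} (hfm : AEStronglyMeasurable f nu) (hgm : AEStronglyMeasurable g nu)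
    (hf2 : Integrable (fun u => f u ^ 2) nu) (hg2 : Integrable (fun u => g u ^ 2) nu) :
    Integrable (fun u => f u * g u) nu := by
  refine Integrable.mono' (((hf2.add hg2).div_const 2)) (hfm.mul hgm) (ae_of_all _ fun u => ?_)
  have h1 : ‖f u * g u‖ = |f u| * |g u| := by rw [Real.norm_eq_abs, abs_mul]
  rw [h1]
  have h2 : ((fun u => f u ^ 2) + fun u => g u ^ 2) u / 2 = (f u ^ 2 + g u ^ 2) / 2 := rfl
  rw [h2]
  nlinarith [sq_nonneg (|f u| - |g u|), sq_abs (f u), sq_abs (g u)]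

/-- Integrability of the square of an affine combination. -/
lemma sq_comb_int (c0 c1 c2 : ℝ) {f g : ℝ → ℝ}
    (hf1 : Integrable f nu) (hg1 : Integrable g nu)
    (hf2 : Integrable (fun u => f u ^ 2) nu) (hg2 : Integrable (fun u => g u ^ 2) nu)
    (hfg : Integrable (fun u => f u * g u) nu) :
    Integrable (fun u => (c0 + c1 * f u + c2 * g u) ^ 2) nu := by
  have key : ∀ u : ℝ, (c0 + c1 * f u + c2 * g u) ^ 2 =
      c0 ^ 2 + (c1 ^ 2 * f u ^ 2 + (c2 ^ 2 * g u ^ 2 + (2 * c0 * c1 * f u +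
        (2 * c0 * c2 * g u + 2 * c1 * c2 * (f u * g u))))) := fun u => by ring
  simp_rw [key]
  exact (integrable_const _).add ((hf2.const_mul _).add ((hg2.const_mul _).add
    ((hf1.const_mul _).add ((hg1.const_mul _).add (hfg.const_mul _)))))

/-- Expansion of the integral of the square of an affine combination. -/
lemma expand_sq (c0 c1 c2 : ℝ) {f g : ℝ → ℝ}
    (hf1 : Integrable f nu) (hg1 : Integrable g nu)
    (hf2 : Integrable (fun u => f u ^ 2) nu) (hg2 : Integrable (fun u => g u ^ 2) nu)
    (hfg : Integrable (fun u => f u * g u) nu) :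
    ∫ u, (c0 + c1 * f u + c2 * g u) ^ 2 ∂nu =
      c0 ^ 2 + c1 ^ 2 * (∫ u, f u ^ 2 ∂nu) + c2 ^ 2 * (∫ u, g u ^ 2 ∂nu)
        + 2 * c0 * c1 * (∫ u, f u ∂nu) + 2 * c0 * c2 * (∫ u, g u ∂nu)
        + 2 * c1 * c2 * (∫ u, f u * g u ∂nu) := by
  have key : ∀ u : ℝ, (c0 + c1 * f u + c2 * g u) ^ 2 =
      c0 ^ 2 + (c1 ^ 2 * f u ^ 2 + (c2 ^ 2 * g u ^ 2 + (2 * c0 * c1 * f u +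
        (2 * c0 * c2 * g u + 2 * c1 * c2 * (f u * g u))))) := fun u => by ring
  simp_rw [key]
  have i6 : Integrable (fun u => 2 * c1 * c2 * (f u * g u)) nu := hfg.const_mul _
  have i5 : Integrable (fun u => 2 * c0 * c2 * g u + 2 * c1 * c2 * (f u * g u)) nu :=
    (hg1.const_mul _).add i6
  have i4 : Integrable (fun u => 2 * c0 * c1 * f u +
      (2 * c0 * c2 * g u + 2 * c1 * c2 * (f u * g u))) nu := (hf1.const_mul _).add i5
  have i3 : Integrable (fun u => c2 ^ 2 * g u ^ 2 + (2 * c0 * c1 * f u +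
      (2 * c0 * c2 * g u + 2 * c1 * c2 * (f u * g u)))) nu := (hg2.const_mul _).add i4
  have i2 : Integrable (fun u => c1 ^ 2 * f u ^ 2 + (c2 ^ 2 * g u ^ 2 + (2 * c0 * c1 * f u +
      (2 * c0 * c2 * g u + 2 * c1 * c2 * (f u * g u))))) nu := (hf2.const_mul _).add i3
  rw [integral_add (integrable_const _) i2, integral_add (hf2.const_mul _) i3,
      integral_add (hg2.const_mul _) i4, integral_add (hf1.const_mul _) i5,
      integral_add (hg1.const_mul _) i6,
      integral_const]
  simp only [integral_const_mul, measureReal_def, measure_univ, ENNReal.toReal_one, smul_eq_mul, one_mul]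
  ring

/-- Expansion of the integral of a product of affine combinations. -/
lemma expand_bilin (a0 a1 b0 b1 b2 : ℝ) {p f g : ℝ → ℝ}
    (hp : Integrable p nu) (hf1 : Integrable f nu) (hg1 : Integrable g nu)
    (hpf : Integrable (fun u => f u * p u) nu) (hpg : Integrable (fun u => g u * p u) nu) :
    ∫ u, (a0 + a1 * p u) * (b0 + b1 * f u + b2 * g u) ∂nu =
      a0 * b0 + a0 * b1 * (∫ u, f u ∂nu) + a0 * b2 * (∫ u, g u ∂nu)
        + a1 * b0 * (∫ u, p u ∂nu) + a1 * b1 * (∫ u, f u * p u ∂nu)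
        + a1 * b2 * (∫ u, g u * p u ∂nu) := by
  have key : ∀ u : ℝ, (a0 + a1 * p u) * (b0 + b1 * f u + b2 * g u) =
      a0 * b0 + (a0 * b1 * f u + (a0 * b2 * g u + (a1 * b0 * p u +
        (a1 * b1 * (f u * p u) + a1 * b2 * (g u * p u))))) := fun u => by ring
  simp_rw [key]
  have i6 : Integrable (fun u => a1 * b2 * (g u * p u)) nu := hpg.const_mul _
  have i5 : Integrable (fun u => a1 * b1 * (f u * p u) + a1 * b2 * (g u * p u)) nu :=
    (hpf.const_mul _).add i6
  have i4 : Integrable (fun u => a1 * b0 * p u +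
      (a1 * b1 * (f u * p u) + a1 * b2 * (g u * p u))) nu := (hp.const_mul _).add i5
  have i3 : Integrable (fun u => a0 * b2 * g u + (a1 * b0 * p u +
      (a1 * b1 * (f u * p u) + a1 * b2 * (g u * p u)))) nu := (hg1.const_mul _).add i4
  have i2 : Integrable (fun u => a0 * b1 * f u + (a0 * b2 * g u + (a1 * b0 * p u +
      (a1 * b1 * (f u * p u) + a1 * b2 * (g u * p u))))) nu := (hf1.const_mul _).add i3
  rw [integral_add (integrable_const _) i2, integral_add (hf1.const_mul _) i3,
      integral_add (hg1.const_mul _) i4, integral_add (hp.const_mul _) i5,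
      integral_add (hpf.const_mul _) i6,
      integral_const]
  simp only [integral_const_mul, measureReal_def, measure_univ, ENNReal.toReal_one, smul_eq_mul, one_mul]
  ring

/-- Cauchy–Schwarz on `(0,1)` with the equality case. -/
lemma cs {f g : ℝ → ℝ} {A B : ℝ}
    (hf2 : Integrable (fun u => f u ^ 2) nu) (hg2 : Integrable (fun u => g u ^ 2) nu)
    (hfg : Integrable (fun u => f u * g u) nu)
    (hA : ∫ u, f u ^ 2 ∂nu = A) (hB : ∫ u, g u ^ 2 ∂nu = B)
    (hApos : 0 < A) (hBpos : 0 < B) :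
    (∫ u, f u * g u ∂nu) ≤ Real.sqrt A * Real.sqrt B ∧
      ((∫ u, f u * g u ∂nu) = Real.sqrt A * Real.sqrt B ↔
        f =ᵐ[nu] fun u => (Real.sqrt A / Real.sqrt B) * g u) := by
  set a := Real.sqrt A with ha_def
  set b := Real.sqrt B with hb_def
  have hapos : 0 < a := Real.sqrt_pos.2 hApos
  have hbpos : 0 < b := Real.sqrt_pos.2 hBpos
  have ha2 : a ^ 2 = A := Real.sq_sqrt hApos.le
  have hb2 : b ^ 2 = B := Real.sq_sqrt hBpos.le
  have hkey : ∀ u : ℝ, (b * f u - a * g u) ^ 2 =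
      b ^ 2 * f u ^ 2 + a ^ 2 * g u ^ 2 - 2 * a * b * (f u * g u) := fun u => by ring
  have hφint : Integrable (fun u => (b * f u - a * g u) ^ 2) nu := by
    simp_rw [hkey]
    exact ((hf2.const_mul _).add (hg2.const_mul _)).sub (hfg.const_mul _)
  have hφval : ∫ u, (b * f u - a * g u) ^ 2 ∂nu
      = 2 * a * b * (a * b - ∫ u, f u * g u ∂nu) := by
    simp_rw [hkey]
    have j1 : Integrable (fun u => b ^ 2 * f u ^ 2 + a ^ 2 * g u ^ 2) nu :=
      (hf2.const_mul _).add (hg2.const_mul _)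
    rw [integral_sub j1 (hfg.const_mul _),
        integral_add (hf2.const_mul _) (hg2.const_mul _),
        integral_const_mul, integral_const_mul, integral_const_mul, hA, hB]
    linear_combination (A - 2 * a ^ 2) * hb2 - B * ha2
  have hφnn : 0 ≤ ∫ u, (b * f u - a * g u) ^ 2 ∂nu :=
    integral_nonneg fun u => sq_nonneg _
  have hle : (∫ u, f u * g u ∂nu) ≤ a * b := by
    have h2 : 0 ≤ 2 * a * b * (a * b - ∫ u, f u * g u ∂nu) := hφval ▸ hφnn
    nlinarith [h2, mul_pos hapos hbpos]
  refine ⟨hle, ?_, ?_⟩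
  · intro hEq
    have hz : ∫ u, (b * f u - a * g u) ^ 2 ∂nu = 0 := by rw [hφval, hEq]; ring
    have hae := (integral_eq_zero_iff_of_nonneg (fun u => sq_nonneg _) hφint).1 hz
    filter_upwards [hae] with u hu
    have hu' : (b * f u - a * g u) ^ 2 = 0 := hu
    have h0 : b * f u - a * g u = 0 := by
      have := sq_eq_zero_iff.1 hu'
      exact this
    field_simp
    linarith
  · intro hEq
    have h1 : (∫ u, f u * g u ∂nu) = ∫ u, (a / b * g u) * g u ∂nu := by
      refine integral_congr_ae ?_
      filter_upwards [hEq] with u hu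
      rw [hu]
    have h2 : ∀ u : ℝ, (a / b * g u) * g u = (a / b) * g u ^ 2 := fun u => by ring
    rw [h1]
    simp_rw [h2]
    rw [integral_const_mul, hB, ← hb2]
    field_simp

/-- A function that is monotone on `(0,1)` and a.e. equal to an antitone function
is a.e. constant. -/
lemma mono_anti_ae {F G : ℝ → ℝ} (hF : MonotoneOn F (Ioo (0:ℝ) 1))
    (hG : AntitoneOn G (Ioo (0:ℝ) 1)) (h : F =ᵐ[nu] G) :
    ∃ c : ℝ, F =ᵐ[nu] fun _ => c := by
  have h0 : volume ({u : ℝ | F u = G u}ᶜ ∩ Ioo (0:ℝ) 1) = 0 := by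
    have hm := mem_ae_iff.1 h
    rwa [nu, Measure.restrict_apply' measurableSet_Ioo] at hm
  have hpos : volume ({u : ℝ | F u = G u} ∩ Ioo (0:ℝ) 1) ≠ 0 := by
    intro hzero
    have hsub : Ioo (0:ℝ) 1 ⊆
        ({u : ℝ | F u = G u} ∩ Ioo (0:ℝ) 1) ∪ ({u : ℝ | F u = G u}ᶜ ∩ Ioo (0:ℝ) 1) := by
      intro x hx
      by_cases hFG : F x = G x
      · exact Or.inl ⟨hFG, hx⟩
      · exact Or.inr ⟨hFG, hx⟩
    have hle : volume (Ioo (0:ℝ) 1) ≤ 0 := by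
      calc volume (Ioo (0:ℝ) 1)
          ≤ volume (({u : ℝ | F u = G u} ∩ Ioo (0:ℝ) 1) ∪
              ({u : ℝ | F u = G u}ᶜ ∩ Ioo (0:ℝ) 1)) := measure_mono hsub
        _ ≤ volume ({u : ℝ | F u = G u} ∩ Ioo (0:ℝ) 1) +
              volume ({u : ℝ | F u = G u}ᶜ ∩ Ioo (0:ℝ) 1) := measure_union_le _ _
        _ = 0 := by rw [hzero, h0]; simp
    simp [Real.volume_Ioo] at hle
  obtain ⟨u0, hu01, hu02⟩ := nonempty_of_measure_ne_zero hpos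
  refine ⟨F u0, ?_⟩
  have hmem : ∀ v, v ∈ {u : ℝ | F u = G u} ∩ Ioo (0:ℝ) 1 → F v = F u0 := by
    rintro v ⟨hv1, hv2⟩
    rcases lt_trichotomy u0 v with hlt | heq | hgt
    · have h1 := hF hu02 hv2 hlt.le
      have h2 := hG hu02 hv2 hlt.le
      have hv1' : F v = G v := hv1
      have hu1' : F u0 = G u0 := hu01
      linarith
    · rw [heq]
    · have h1 := hF hv2 hu02 hgt.le
      have h2 := hG hv2 hu02 hgt.le
      have hv1' : F v = G v := hv1
      have hu1' : F u0 = G u0 := hu01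
      linarith
  have hsub2 : {u : ℝ | ¬ F u = F u0} ∩ Ioo (0:ℝ) 1 ⊆
      {u : ℝ | F u = G u}ᶜ ∩ Ioo (0:ℝ) 1 := by
    rintro x ⟨hx1, hx2⟩
    exact ⟨fun hFG => hx1 (hmem x ⟨hFG, hx2⟩), hx2⟩
  have hnull : nu {u : ℝ | ¬ F u = F u0} = 0 := by
    rw [nu, Measure.restrict_apply' measurableSet_Ioo]
    exact measure_mono_null hsub2 h0
  exact ae_iff.2 hnull

end Stmt10

open Stmt10

set_option maxHeartbeats 2000000 in
theorem statement10
    (μ μF σ σF : ℝ) (hσpos : 0 < σ) (hσFpos : 0 < σF)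
    (qF : ℝ → ℝ) (hqF : IsQuantile qF)
    (hqFm : intI qF = μF) (hqF2 : intI (fun u => qF u ^ 2) = μF ^ 2 + σF ^ 2)
    (γ : ℝ → ℝ) (hγmono : MonotoneOn γ (Ioo (0:ℝ) 1)) (hγsq : SqInt γ)
    (hγ1 : intI γ = 1)
    (σ0 : ℝ) (hσ0 : σ0 = Real.sqrt (intI (fun u => γ u ^ 2) - 1)) (hσ0pos : 0 < σ0)
    (ρ : ℝ) (hρ : ρ = (intI (fun u => γ u * qF u) - μF) / (σ0 * σF))
    (εmin : ℝ) (hεmin : εmin = (μF - μ) ^ 2 + (σF - σ) ^ 2)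
    (εmax : ℝ) (hεmax : εmax = εmin + 2 * σ * σF * (1 - ρ))
    (hρ1 : ρ < 1)
    (ε : ℝ) (hε1 : εmin < ε) (hε2 : ε < εmax)
    (δs : ℝ)
    (hδs : δs = -(σ0 * ρ) / (2 * σF) +
      σ0 * Real.sqrt (1 - ρ ^ 2) * (εmin + 2 * σ * σF - ε) /
        (2 * σF * Real.sqrt ((εmin + 4 * σ * σF - ε) * (ε - εmin))))
    (δ : ℝ) (hδ0 : 0 ≤ δ) (hδ : δ < δs) :
    (∀ q : ℝ → ℝ, MemM μ σ q → W2 qF q ≤ ε →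
      Jpen γ qF δ q ≤ μ - δ * (εmin + 2 * σ * σF) +
        σ / sigD σ0 σF ρ δs *
          (σ0 ^ 2 + 2 * (δ + δs) * σ0 * σF * ρ + 4 * δ * δs * σF ^ 2) ∧
      (Jpen γ qF δ q = μ - δ * (εmin + 2 * σ * σF) +
        σ / sigD σ0 σF ρ δs *
          (σ0 ^ 2 + 2 * (δ + δs) * σ0 * σF * ρ + 4 * δ * δs * σF ^ 2) ↔
        AeEqI q (qD μ σ μF σ0 σF ρ δs γ qF))) ∧
    W2 qF (qD μ σ μF σ0 σF ρ δs γ qF) = ε := by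
  -- basic integrability
  have hγi : Integrable γ nu := hγsq.1
  have hγ2i : Integrable (fun u => γ u ^ 2) nu := hγsq.2
  have hqFi : Integrable qF nu := hqF.2.1
  have hqF2i : Integrable (fun u => qF u ^ 2) nu := hqF.2.2
  have hγqFi : Integrable (fun u => γ u * qF u) nu :=
    mul_int hγi.aestronglyMeasurable hqFi.aestronglyMeasurable hγ2i hqF2i
  have Iγ : ∫ u, γ u ∂nu = 1 := hγ1
  have IqF : ∫ u, qF u ∂nu = μF := hqFm
  have IqF2 : ∫ u, qF u ^ 2 ∂nu = μF ^ 2 + σF ^ 2 := hqF2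
  -- second moment of γ
  have hγ2nn : (0:ℝ) ≤ intI (fun u => γ u ^ 2) - 1 := by
    by_contra hneg
    push_neg at hneg
    have h0 : Real.sqrt (intI (fun u => γ u ^ 2) - 1) = 0 := Real.sqrt_eq_zero'.2 hneg.le
    rw [hσ0, h0] at hσ0pos
    exact lt_irrefl 0 hσ0pos
  have Iγ2 : ∫ u, γ u ^ 2 ∂nu = 1 + σ0 ^ 2 := by
    have h := Real.sq_sqrt hγ2nn
    rw [← hσ0] at h
    have h2 : intI (fun u => γ u ^ 2) = 1 + σ0 ^ 2 := by linarith
    exact h2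
  have IγqF : ∫ u, γ u * qF u ∂nu = μF + σ0 * σF * ρ := by
    have h : intI (fun u => γ u * qF u) = μF + σ0 * σF * ρ := by
      rw [hρ]
      field_simp
      ring
    exact h
  -- ρ > -1
  have hρm1 : -1 < ρ := by
    by_contra hle
    push_neg at hle
    have hg0sq : ∫ u, (-(σF + σ0 * μF) + σF * γ u + σ0 * qF u) ^ 2 ∂nu
        = 2 * σ0 ^ 2 * σF ^ 2 * (1 + ρ) := by
      rw [expand_sq _ _ _ hγi hqFi hγ2i hqF2i hγqFi, Iγ, IqF, Iγ2, IqF2, IγqF]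
      ring
    have hnn : 0 ≤ ∫ u, (-(σF + σ0 * μF) + σF * γ u + σ0 * qF u) ^ 2 ∂nu :=
      integral_nonneg fun u => sq_nonneg _
    have hzero : ∫ u, (-(σF + σ0 * μF) + σF * γ u + σ0 * qF u) ^ 2 ∂nu = 0 := by
      refine le_antisymm ?_ hnn
      rw [hg0sq]
      have hfac : 0 ≤ (2 * σ0 ^ 2 * σF ^ 2) * (-(1 + ρ)) :=
        mul_nonneg (by positivity) (by linarith)
      nlinarith [hfac]
    have hg0int : Integrable (fun u => (-(σF + σ0 * μF) + σF * γ u + σ0 * qF u) ^ 2) nu :=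
      sq_comb_int _ _ _ hγi hqFi hγ2i hqF2i hγqFi
    have hae := (integral_eq_zero_iff_of_nonneg (fun u => sq_nonneg _) hg0int).1 hzero
    have hFG : γ =ᵐ[nu] fun u => (σF + σ0 * μF - σ0 * qF u) / σF := by
      filter_upwards [hae] with u hu
      have hu' : (-(σF + σ0 * μF) + σF * γ u + σ0 * qF u) ^ 2 = 0 := hu
      have h0 : -(σF + σ0 * μF) + σF * γ u + σ0 * qF u = 0 := by
        exact sq_eq_zero_iff.1 hu'
      field_simp
      linarith
    have hanti : AntitoneOn (fun u => (σF + σ0 * μF - σ0 * qF u) / σF) (Ioo (0:ℝ) 1) := by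
      intro x hx y hy hxy
      have h := hqF.1 hx hy hxy
      have h2 : σ0 * qF x ≤ σ0 * qF y := mul_le_mul_of_nonneg_left h hσ0pos.le
      have h3 : σF + σ0 * μF - σ0 * qF y ≤ σF + σ0 * μF - σ0 * qF x := by linarith
      exact (div_le_div_iff_of_pos_right hσFpos).mpr h3
    obtain ⟨c, hc⟩ := mono_anti_ae hγmono hanti hFG
    have h1c : (1:ℝ) = c := by
      rw [← Iγ, integral_congr_ae hc]
      simp [measure_univ]
    have h2c : 1 + σ0 ^ 2 = c ^ 2 := by
      have hc2 : (fun u => γ u ^ 2) =ᵐ[nu] fun _ => c ^ 2 := by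
        filter_upwards [hc] with u hu
        rw [hu]
      rw [← Iγ2, integral_congr_ae hc2]
      simp [measure_univ]
    nlinarith [mul_pos hσ0pos hσ0pos]
  -- numeric facts
  have hρsq : ρ ^ 2 < 1 := by
    nlinarith [mul_pos (by linarith : (0:ℝ) < 1 - ρ) (by linarith : (0:ℝ) < 1 + ρ)]
  have h1ρ : 0 < 1 - ρ ^ 2 := by linarith
  have hσσF2 : 0 < σ * σF := mul_pos hσpos hσFpos
  have he1 : 0 < ε - εmin := by linarith
  have hε2' : ε < εmin + 2 * σ * σF * (1 - ρ) := by rw [← hεmax]; exact hε2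
  have he3 : 0 < εmin + 4 * σ * σF - ε := by
    nlinarith [mul_pos hσσF2 (by linarith : (0:ℝ) < 1 + ρ)]
  have hspos : 0 < Real.sqrt ((εmin + 4 * σ * σF - ε) * (ε - εmin)) :=
    Real.sqrt_pos.2 (mul_pos he3 he1)
  have hs2 : Real.sqrt ((εmin + 4 * σ * σF - ε) * (ε - εmin)) ^ 2
      = (εmin + 4 * σ * σF - ε) * (ε - εmin) := Real.sq_sqrt (mul_pos he3 he1).le
  have hkpos : 0 < σ0 * Real.sqrt (1 - ρ ^ 2) := mul_pos hσ0pos (Real.sqrt_pos.2 h1ρ)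
  have hk2 : (σ0 * Real.sqrt (1 - ρ ^ 2)) ^ 2 = σ0 ^ 2 * (1 - ρ ^ 2) := by
    rw [mul_pow, Real.sq_sqrt h1ρ.le]
  set s := Real.sqrt ((εmin + 4 * σ * σF - ε) * (ε - εmin)) with hs_def
  set k := σ0 * Real.sqrt (1 - ρ ^ 2) with hk_def
  have hxs : (σ0 * ρ + 2 * δs * σF) * s = k * (εmin + 2 * σ * σF - ε) := by
    rw [hδs]
    field_simp
    ring
  have hrad : σ0 ^ 2 + 4 * δs ^ 2 * σF ^ 2 + 4 * δs * σ0 * σF * ρ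
      = (σ0 * ρ + 2 * δs * σF) ^ 2 + k ^ 2 := by
    rw [hk2]
    ring
  have hx2s2 : (σ0 * ρ + 2 * δs * σF) ^ 2 * s ^ 2 = k ^ 2 * (εmin + 2 * σ * σF - ε) ^ 2 := by
    linear_combination ((σ0 * ρ + 2 * δs * σF) * s + k * (εmin + 2 * σ * σF - ε)) * hxs
  have hsd2' : ((σ0 * ρ + 2 * δs * σF) ^ 2 + k ^ 2) * s ^ 2 = (2 * k * σ * σF) ^ 2 := by
    linear_combination hx2s2 + k ^ 2 * hs2
  have hnum : 0 < 2 * k * σ * σF := mul_pos (mul_pos (mul_pos two_pos hkpos) hσpos) hσFpos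
  have hdivpos : 0 < 2 * k * σ * σF / s := div_pos hnum hspos
  set sd := sigD σ0 σF ρ δs with hsd_def
  have hsdval : sd = 2 * k * σ * σF / s := by
    rw [hsd_def]
    simp only [sigD]
    rw [hrad]
    have hxk : (σ0 * ρ + 2 * δs * σF) ^ 2 + k ^ 2 = (2 * k * σ * σF / s) ^ 2 := by
      rw [div_pow, eq_div_iff (pow_ne_zero 2 hspos.ne')]
      linear_combination hsd2'
    rw [hxk, Real.sqrt_sq hdivpos.le]
  have hsdpos : 0 < sd := by rw [hsdval]; exact hdivpos
  have hsdne : sd ≠ 0 := hsdpos.ne'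
  have hsd2 : sd ^ 2 = σ0 ^ 2 + 4 * δs ^ 2 * σF ^ 2 + 4 * δs * σ0 * σF * ρ := by
    rw [hsd_def]
    simp only [sigD]
    refine Real.sq_sqrt ?_
    rw [hrad]
    positivity
  have hkey : sd * (εmin + 2 * σ * σF - ε) = 2 * σ * σF * (σ0 * ρ + 2 * δs * σF) := by
    rw [hsdval, div_mul_eq_mul_div, div_eq_iff hspos.ne']
    linear_combination (-(2 * σ * σF)) * hxs
  have hb2 : (σ / sd) ^ 2 * (σ0 ^ 2 + 4 * δs ^ 2 * σF ^ 2 + 4 * δs * σ0 * σF * ρ) = σ ^ 2 := by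
    rw [← hsd2]
    field_simp
  have hssd : σ * sd = σ / sd * (σ0 ^ 2 + 4 * δs ^ 2 * σF ^ 2 + 4 * δs * σ0 * σF * ρ) := by
    rw [← hsd2]
    field_simp
    try ring
  have haux1 : ε = εmin + 2 * σ * σF - 2 * (σ / sd) * (σ0 * σF * ρ + 2 * δs * σF ^ 2) := by
    have h2 : εmin + 2 * σ * σF - ε
        = sd⁻¹ * (2 * σ * σF * (σ0 * ρ + 2 * δs * σF)) := by
      rw [inv_mul_eq_div, eq_div_iff hsdne]
      linear_combination hkey
    linear_combination -h2
  set qDf := qD μ σ μF σ0 σF ρ δs γ qF with hqD_def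
  have hqDval : ∀ u : ℝ, qDf u
      = μ - σ / sd * (1 + 2 * δs * μF) + σ / sd * (γ u + 2 * δs * qF u) := by
    intro u
    rw [hqD_def]
    simp only [qD]
    rfl
  have hV : W2 qF qDf = ε := by
    have h1 : W2 qF qDf = ∫ u, ((σ / sd * (1 + 2 * δs * μF) - μ) + (-(σ / sd)) * γ u
        + (1 - 2 * (σ / sd) * δs) * qF u) ^ 2 ∂nu := by
      have h0 : W2 qF qDf = ∫ u, (qF u - qDf u) ^ 2 ∂nu := rfl
      rw [h0]
      refine integral_congr_ae (ae_of_all _ fun u => ?_)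
      simp only [hqDval]
      ring
    rw [h1, expand_sq _ _ _ hγi hqFi hγ2i hqF2i hγqFi, Iγ, IqF, Iγ2, IqF2, IγqF]
    linear_combination hb2 - hεmin - haux1
  refine ⟨fun q hq hW => ?_, hV⟩
  obtain ⟨⟨hqmono, hqsq⟩, hqm, hq2m⟩ := hq
  have hqi : Integrable q nu := hqsq.1
  have hq2i : Integrable (fun u => q u ^ 2) nu := hqsq.2
  have Iq : ∫ u, q u ∂nu = μ := hqm
  have Iq2 : ∫ u, q u ^ 2 ∂nu = μ ^ 2 + σ ^ 2 := hq2m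
  have hγqi : Integrable (fun u => γ u * q u) nu :=
    mul_int hγi.aestronglyMeasurable hqi.aestronglyMeasurable hγ2i hq2i
  have hqFqi : Integrable (fun u => qF u * q u) nu :=
    mul_int hqFi.aestronglyMeasurable hqi.aestronglyMeasurable hqF2i hq2i
  have hqqi : Integrable (fun u => q u * q u) nu :=
    mul_int hqi.aestronglyMeasurable hqi.aestronglyMeasurable hq2i hq2i
  have hW2q : W2 qF q = (μF ^ 2 + σF ^ 2) + (μ ^ 2 + σ ^ 2) - 2 * ∫ u, qF u * q u ∂nu := by
    have h0 : W2 qF q = ∫ u, ((0:ℝ) + 1 * qF u + (-1) * q u) ^ 2 ∂nu := by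
      have h0' : W2 qF q = ∫ u, (qF u - q u) ^ 2 ∂nu := rfl
      rw [h0']
      exact integral_congr_ae (ae_of_all _ fun u => by ring)
    rw [h0, expand_sq _ _ _ hqFi hqi hqF2i hq2i hqFqi, IqF2, Iq2, IqF, Iq]
    ring
  have hf0sq : ∫ u, (q u - μ) ^ 2 ∂nu = σ ^ 2 := by
    have h0 : ∫ u, (q u - μ) ^ 2 ∂nu = ∫ u, ((-μ) + 1 * q u + 0 * q u) ^ 2 ∂nu :=
      integral_congr_ae (ae_of_all _ fun u => by ring)
    rw [h0, expand_sq _ _ _ hqi hqi hq2i hq2i hqqi, Iq, Iq2]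
    ring
  have hg0sq : ∫ u, (γ u + 2 * δs * qF u - (1 + 2 * δs * μF)) ^ 2 ∂nu = sd ^ 2 := by
    have h0 : ∫ u, (γ u + 2 * δs * qF u - (1 + 2 * δs * μF)) ^ 2 ∂nu
        = ∫ u, ((-(1 + 2 * δs * μF)) + 1 * γ u + (2 * δs) * qF u) ^ 2 ∂nu :=
      integral_congr_ae (ae_of_all _ fun u => by ring)
    rw [h0, expand_sq _ _ _ hγi hqFi hγ2i hqF2i hγqFi, Iγ, IqF, Iγ2, IqF2, IγqF, hsd2]
    ring
  have hf0m : AEStronglyMeasurable (fun u => q u - μ) nu :=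
    hqi.aestronglyMeasurable.sub aestronglyMeasurable_const
  have hg0m : AEStronglyMeasurable (fun u => γ u + 2 * δs * qF u - (1 + 2 * δs * μF)) nu :=
    (hγi.aestronglyMeasurable.add (hqFi.aestronglyMeasurable.const_mul (2 * δs))).sub
      aestronglyMeasurable_const
  have hf0sqint : Integrable (fun u => (q u - μ) ^ 2) nu :=
    (sq_comb_int (-μ) 1 0 hqi hqi hq2i hq2i hqqi).congr (ae_of_all _ fun u => by ring)
  have hg0sqint : Integrable (fun u => (γ u + 2 * δs * qF u - (1 + 2 * δs * μF)) ^ 2) nu :=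
    (sq_comb_int (-(1 + 2 * δs * μF)) 1 (2 * δs) hγi hqFi hγ2i hqF2i hγqFi).congr
      (ae_of_all _ fun u => by ring)
  have hfgint : Integrable
      (fun u => (q u - μ) * (γ u + 2 * δs * qF u - (1 + 2 * δs * μF))) nu :=
    mul_int hf0m hg0m hf0sqint hg0sqint
  have hf0g0 : ∫ u, (q u - μ) * (γ u + 2 * δs * qF u - (1 + 2 * δs * μF)) ∂nu
      = (∫ u, γ u * q u ∂nu) + 2 * δs * (∫ u, qF u * q u ∂nu) - μ * (1 + 2 * δs * μF) := by
    have h0 : ∫ u, (q u - μ) * (γ u + 2 * δs * qF u - (1 + 2 * δs * μF)) ∂nu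
        = ∫ u, ((-μ) + 1 * q u) * ((-(1 + 2 * δs * μF)) + 1 * γ u + (2 * δs) * qF u) ∂nu :=
      integral_congr_ae (ae_of_all _ fun u => by ring)
    rw [h0, expand_bilin _ _ _ _ _ hqi hγi hqFi hγqi hqFqi, Iγ, IqF, Iq]
    ring
  obtain ⟨hCSle, hCSiff⟩ := cs hf0sqint hg0sqint hfgint hf0sq hg0sq
    (pow_pos hσpos 2) (pow_pos hsdpos 2)
  rw [Real.sqrt_sq hσpos.le, Real.sqrt_sq hsdpos.le] at hCSle hCSiff
  have hAeIff : AeEqI q qDf ↔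
      (fun u => q u - μ) =ᵐ[nu]
        fun u => σ / sd * (γ u + 2 * δs * qF u - (1 + 2 * δs * μF)) := by
    constructor
    · intro h
      have h' : q =ᵐ[nu] qDf := h
      filter_upwards [h'] with u hu
      rw [hu, hqDval u]
      ring
    · intro h
      show q =ᵐ[nu] qDf
      filter_upwards [h] with u hu
      rw [hqDval u]
      linear_combination hu
  have hBid : μ - δ * (εmin + 2 * σ * σF) + σ / sd *
        (σ0 ^ 2 + 2 * (δ + δs) * σ0 * σF * ρ + 4 * δ * δs * σF ^ 2)
      = μ * (1 + 2 * δs * μF) + σ * sd - δs * (μ ^ 2 + σ ^ 2 + μF ^ 2 + σF ^ 2)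
        + (δs - δ) * ε := by
    linear_combination -hssd - (δs - δ) * haux1 - δs * hεmin
  have hJ : Jpen γ qF δ q = (∫ u, (q u - μ) * (γ u + 2 * δs * qF u - (1 + 2 * δs * μF)) ∂nu)
      + μ * (1 + 2 * δs * μF) - δs * (μ ^ 2 + σ ^ 2 + μF ^ 2 + σF ^ 2)
      + (δs - δ) * W2 qF q := by
    have h0 : Jpen γ qF δ q = (∫ u, γ u * q u ∂nu) - δ * W2 qF q := rfl
    rw [h0]
    linear_combination -hf0g0 - δs * hW2q
  have hprod : (δs - δ) * W2 qF q ≤ (δs - δ) * ε :=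
    mul_le_mul_of_nonneg_left hW (by linarith)
  constructor
  · rw [hJ, hBid]
    linarith [hCSle, hprod]
  · constructor
    · intro hEq
      rw [hJ, hBid] at hEq
      have hFeq : (∫ u, (q u - μ) * (γ u + 2 * δs * qF u - (1 + 2 * δs * μF)) ∂nu)
          = σ * sd := by
        linarith [hCSle, hprod]
      exact hAeIff.2 (hCSiff.1 hFeq)
    · intro hAe
      have hf0 := hAeIff.1 hAe
      have hFeq := hCSiff.2 hf0
      have hW2eq : W2 qF q = ε := by
        have hq' : q =ᵐ[nu] qDf := hAe
        have h1 : W2 qF q = W2 qF qDf := by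
          have h2 : (fun u => (qF u - q u) ^ 2) =ᵐ[nu] fun u => (qF u - qDf u) ^ 2 := by
            filter_upwards [hq'] with u hu
            rw [hu]
          exact integral_congr_ae h2
        rw [h1, hV]
      rw [hJ, hBid, hFeq, hW2eq]
      ring
end
end

section
/- Let σ > 0, σ₀ > 0, σ_F > 0, ρ ∈ (−1, 1) and δ ≥ 0. Define s(d) := sqrt(σ₀² + 4d²σ_F² + 4dσ₀σ_Fρ) for d ≥ 0, and h(d) := σ·s(d) + 2(δ − d)(σ/s(d))(2dσ_F² + σ₀σ_Fρ). Then h is strictly decreasing on the interval (δ, ∞). -/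
open Set

theorem statement12 (σ σ0 σF ρ δ : ℝ) (hσ : 0 < σ) (hσ0 : 0 < σ0) (hσF : 0 < σF)
    (hρ1 : -1 < ρ) (hρ2 : ρ < 1) (hδ : 0 ≤ δ) :
    StrictAntiOn
      (fun d : ℝ =>
        σ * Real.sqrt (σ0 ^ 2 + 4 * d ^ 2 * σF ^ 2 + 4 * d * σ0 * σF * ρ) +
          2 * (δ - d) *
            (σ / Real.sqrt (σ0 ^ 2 + 4 * d ^ 2 * σF ^ 2 + 4 * d * σ0 * σF * ρ)) *
            (2 * d * σF ^ 2 + σ0 * σF * ρ))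
      (Ioi δ) := by
  set f : ℝ → ℝ := fun d =>
        σ * Real.sqrt (σ0 ^ 2 + 4 * d ^ 2 * σF ^ 2 + 4 * d * σ0 * σF * ρ) +
          2 * (δ - d) *
            (σ / Real.sqrt (σ0 ^ 2 + 4 * d ^ 2 * σF ^ 2 + 4 * d * σ0 * σF * ρ)) *
            (2 * d * σF ^ 2 + σ0 * σF * ρ) with hf
  have key : ∀ x ∈ Ioi δ, ∃ E : ℝ, HasDerivAt f E x ∧ E < 0 := by
    intro x hx
    have hxδ : δ < x := hx
    have hx0 : 0 < x := lt_of_le_of_lt hδ hxδ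
    have hQ : 0 < σ0 ^ 2 + 4 * x ^ 2 * σF ^ 2 + 4 * x * σ0 * σF * ρ := by
      nlinarith [sq_nonneg (σ0 + 2 * x * σF * ρ),
        mul_pos (mul_pos (mul_pos hx0 hx0) (mul_pos hσF hσF))
          (show (0:ℝ) < 1 - ρ ^ 2 by nlinarith)]
    set S := Real.sqrt (σ0 ^ 2 + 4 * x ^ 2 * σF ^ 2 + 4 * x * σ0 * σF * ρ) with hSdef
    have hS : 0 < S := Real.sqrt_pos.mpr hQ
    have hS2 : S ^ 2 = σ0 ^ 2 + 4 * x ^ 2 * σF ^ 2 + 4 * x * σ0 * σF * ρ :=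
      Real.sq_sqrt hQ.le
    -- derivative of the quadratic
    have hQ' : HasDerivAt (fun d : ℝ => σ0 ^ 2 + 4 * d ^ 2 * σF ^ 2 + 4 * d * σ0 * σF * ρ)
        (8 * x * σF ^ 2 + 4 * σ0 * σF * ρ) x := by
      have h1 : HasDerivAt (fun d : ℝ => d ^ 2) (2 * x) x := by
        simpa using hasDerivAt_pow 2 x
      have h2 : HasDerivAt (fun d : ℝ => d) 1 x := hasDerivAt_id x
      have := ((hasDerivAt_const x (σ0 ^ 2)).add
        (((h1.const_mul (4:ℝ)).mul_const (σF ^ 2)).add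
          (((h2.const_mul (4:ℝ)).mul_const σ0).mul_const σF |>.mul_const ρ)))
      convert this using 1
      · rfl
      · rfl
      · funext d; simp only [Pi.add_apply]; ring
      · ring
    have hs' : HasDerivAt (fun d : ℝ =>
        Real.sqrt (σ0 ^ 2 + 4 * d ^ 2 * σF ^ 2 + 4 * d * σ0 * σF * ρ))
        ((8 * x * σF ^ 2 + 4 * σ0 * σF * ρ) / (2 * S)) x := hQ'.sqrt hQ.ne'
    have hu : HasDerivAt (fun d : ℝ => 2 * (δ - d)) (-2) x := by
      have := ((hasDerivAt_const x δ).sub (hasDerivAt_id x)).const_mul (2:ℝ)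
      exact this.congr_deriv (by ring)
    have hv : HasDerivAt (fun d : ℝ =>
        σ / Real.sqrt (σ0 ^ 2 + 4 * d ^ 2 * σF ^ 2 + 4 * d * σ0 * σF * ρ))
        ((0 * S - σ * ((8 * x * σF ^ 2 + 4 * σ0 * σF * ρ) / (2 * S))) / S ^ 2) x :=
      (hasDerivAt_const x σ).div hs' hS.ne'
    have hw : HasDerivAt (fun d : ℝ => 2 * d * σF ^ 2 + σ0 * σF * ρ) (2 * σF ^ 2) x := by
      have := (((hasDerivAt_id x).const_mul (2:ℝ)).mul_const (σF ^ 2)).add_const (σ0 * σF * ρ)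
      exact this.congr_deriv (by ring)
    have hD := (hs'.const_mul σ).add ((hu.mul hv).mul hw)
    refine ⟨_, hD, ?_⟩
    set E := σ * ((8 * x * σF ^ 2 + 4 * σ0 * σF * ρ) / (2 * S)) +
      ((-2 * (σ / S) + 2 * (δ - x) *
        ((0 * S - σ * ((8 * x * σF ^ 2 + 4 * σ0 * σF * ρ) / (2 * S))) / S ^ 2)) *
        (2 * x * σF ^ 2 + σ0 * σF * ρ) +
        2 * (δ - x) * (σ / S) * (2 * σF ^ 2)) with hE
    have hE3 : E * S ^ 3 = 4 * σ * (δ - x) * (σ0 ^ 2 * σF ^ 2 * (1 - ρ ^ 2)) := by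
      rw [hE]
      field_simp
      ring_nf
      linear_combination (8 * σ * σF * (δ - x)) * hS2
    have hnum : 4 * σ * (δ - x) * (σ0 ^ 2 * σF ^ 2 * (1 - ρ ^ 2)) < 0 := by
      have h1 : 0 < 1 - ρ ^ 2 := by nlinarith
      have h2 : 0 < σ0 ^ 2 * σF ^ 2 * (1 - ρ ^ 2) := by positivity
      nlinarith [mul_pos (mul_pos hσ (show (0:ℝ) < x - δ by linarith)) h2]
    have hS3 : 0 < S ^ 3 := pow_pos hS 3
    change E < 0
    by_contra hcon
    push_neg at hcon
    nlinarith [mul_nonneg hcon hS3.le]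
  have hderiv : ∀ x ∈ interior (Ioi δ), deriv f x < 0 := by
    intro x hx
    rw [interior_Ioi] at hx
    obtain ⟨E, hD, hE⟩ := key x hx
    rwa [hD.deriv]
  exact strictAntiOn_of_deriv_neg (convex_Ioi δ)
    (fun x hx => by
      obtain ⟨E, hD, _⟩ := key x hx
      exact hD.continuousAt.continuousWithinAt)
    hderiv
end

section
/- Let δ̄ > 0 and let q ∈ M(μ,σ) satisfy ∫ q_F q = ∫ q_F q_{δ̄} (equivalently, d²(q_F, q) = d²(q_F, q_{δ̄})). Then ∫ γ q ≤ ∫ γ q_{δ̄}; that is, among all elements of M(μ,σ) at the same Wasserstein distance from q_F as q_{δ̄}, the distortion value ∫ γ q is maximized by q_{δ̄}. -/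
open MeasureTheory Set Filter

noncomputable section

lemma volIoo : (volume : Measure ℝ) (Ioo (0:ℝ) 1) < ⊤ := by
  rw [Real.volume_Ioo]; exact ENNReal.ofReal_lt_top

lemma sqIntMul {f g : ℝ → ℝ}
    (hf : IntegrableOn f (Ioo (0:ℝ) 1) volume)
    (hf2 : IntegrableOn (fun u => f u ^ 2) (Ioo (0:ℝ) 1) volume)
    (hg : IntegrableOn g (Ioo (0:ℝ) 1) volume)
    (hg2 : IntegrableOn (fun u => g u ^ 2) (Ioo (0:ℝ) 1) volume) :
    IntegrableOn (fun u => f u * g u) (Ioo (0:ℝ) 1) volume := by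
  have hm : AEStronglyMeasurable (fun u => f u * g u)
      ((volume : Measure ℝ).restrict (Ioo (0:ℝ) 1)) :=
    hf.aestronglyMeasurable.mul hg.aestronglyMeasurable
  refine Integrable.mono' (hf2.add hg2) hm ?_
  filter_upwards with u
  rw [Real.norm_eq_abs]
  simp only [Pi.add_apply]
  rcases abs_cases (f u * g u) with ⟨h1, _⟩ | ⟨h1, _⟩ <;> rw [h1] <;>
    nlinarith [sq_nonneg (f u - g u), sq_nonneg (f u + g u)]

lemma integral_lin9 (c0 c1 c2 c3 c4 c5 c6 c7 c8 c9 : ℝ) (f1 f2 f3 f4 f5 f6 f7 f8 f9 : ℝ → ℝ)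
    (h1 : IntegrableOn f1 (Ioo (0:ℝ) 1) volume)
    (h2 : IntegrableOn f2 (Ioo (0:ℝ) 1) volume)
    (h3 : IntegrableOn f3 (Ioo (0:ℝ) 1) volume)
    (h4 : IntegrableOn f4 (Ioo (0:ℝ) 1) volume)
    (h5 : IntegrableOn f5 (Ioo (0:ℝ) 1) volume)
    (h6 : IntegrableOn f6 (Ioo (0:ℝ) 1) volume)
    (h7 : IntegrableOn f7 (Ioo (0:ℝ) 1) volume)
    (h8 : IntegrableOn f8 (Ioo (0:ℝ) 1) volume)
    (h9 : IntegrableOn f9 (Ioo (0:ℝ) 1) volume) :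
    (∫ u in Ioo (0:ℝ) 1, (c1 * f1 u + c2 * f2 u + c3 * f3 u + c4 * f4 u + c5 * f5 u
        + c6 * f6 u + c7 * f7 u + c8 * f8 u + c9 * f9 u + c0))
      = c1 * (∫ u in Ioo (0:ℝ) 1, f1 u) + c2 * (∫ u in Ioo (0:ℝ) 1, f2 u)
        + c3 * (∫ u in Ioo (0:ℝ) 1, f3 u) + c4 * (∫ u in Ioo (0:ℝ) 1, f4 u)
        + c5 * (∫ u in Ioo (0:ℝ) 1, f5 u) + c6 * (∫ u in Ioo (0:ℝ) 1, f6 u)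
        + c7 * (∫ u in Ioo (0:ℝ) 1, f7 u) + c8 * (∫ u in Ioo (0:ℝ) 1, f8 u)
        + c9 * (∫ u in Ioo (0:ℝ) 1, f9 u) + c0 := by
  set ν := (volume : Measure ℝ).restrict (Ioo (0:ℝ) 1) with hν
  have i1 : Integrable (fun u => c1 * f1 u) ν := h1.const_mul c1
  have i2 : Integrable (fun u => c2 * f2 u) ν := h2.const_mul c2
  have i3 : Integrable (fun u => c3 * f3 u) ν := h3.const_mul c3
  have i4 : Integrable (fun u => c4 * f4 u) ν := h4.const_mul c4
  have i5 : Integrable (fun u => c5 * f5 u) ν := h5.const_mul c5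
  have i6 : Integrable (fun u => c6 * f6 u) ν := h6.const_mul c6
  have i7 : Integrable (fun u => c7 * f7 u) ν := h7.const_mul c7
  have i8 : Integrable (fun u => c8 * f8 u) ν := h8.const_mul c8
  have i9 : Integrable (fun u => c9 * f9 u) ν := h9.const_mul c9
  have s2 : Integrable (fun u => c1 * f1 u + c2 * f2 u) ν := i1.add i2
  have s3 : Integrable (fun u => c1 * f1 u + c2 * f2 u + c3 * f3 u) ν := s2.add i3
  have s4 : Integrable (fun u => c1 * f1 u + c2 * f2 u + c3 * f3 u + c4 * f4 u) ν := s3.add i4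
  have s5 : Integrable (fun u => c1 * f1 u + c2 * f2 u + c3 * f3 u + c4 * f4 u + c5 * f5 u) ν :=
    s4.add i5
  have s6 : Integrable (fun u => c1 * f1 u + c2 * f2 u + c3 * f3 u + c4 * f4 u + c5 * f5 u
      + c6 * f6 u) ν := s5.add i6
  have s7 : Integrable (fun u => c1 * f1 u + c2 * f2 u + c3 * f3 u + c4 * f4 u + c5 * f5 u
      + c6 * f6 u + c7 * f7 u) ν := s6.add i7
  have s8 : Integrable (fun u => c1 * f1 u + c2 * f2 u + c3 * f3 u + c4 * f4 u + c5 * f5 u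
      + c6 * f6 u + c7 * f7 u + c8 * f8 u) ν := s7.add i8
  have s9 : Integrable (fun u => c1 * f1 u + c2 * f2 u + c3 * f3 u + c4 * f4 u + c5 * f5 u
      + c6 * f6 u + c7 * f7 u + c8 * f8 u + c9 * f9 u) ν := s8.add i9
  have ic : Integrable (fun _ : ℝ => c0) ν := by
    refine integrableOn_const volIoo.ne
  rw [integral_add s9 ic, integral_add s8 i9, integral_add s7 i8, integral_add s6 i7,
    integral_add s5 i6, integral_add s4 i5, integral_add s3 i4, integral_add s2 i3,
    integral_add i1 i2, integral_const_mul, integral_const_mul, integral_const_mul,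
    integral_const_mul, integral_const_mul, integral_const_mul, integral_const_mul,
    integral_const_mul, integral_const_mul, setIntegral_const, measureReal_def, Real.volume_Ioo]
  norm_num

lemma integrable_lin9 (c0 c1 c2 c3 c4 c5 c6 c7 c8 c9 : ℝ) (f1 f2 f3 f4 f5 f6 f7 f8 f9 : ℝ → ℝ)
    (h1 : IntegrableOn f1 (Ioo (0:ℝ) 1) volume)
    (h2 : IntegrableOn f2 (Ioo (0:ℝ) 1) volume)
    (h3 : IntegrableOn f3 (Ioo (0:ℝ) 1) volume)
    (h4 : IntegrableOn f4 (Ioo (0:ℝ) 1) volume)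
    (h5 : IntegrableOn f5 (Ioo (0:ℝ) 1) volume)
    (h6 : IntegrableOn f6 (Ioo (0:ℝ) 1) volume)
    (h7 : IntegrableOn f7 (Ioo (0:ℝ) 1) volume)
    (h8 : IntegrableOn f8 (Ioo (0:ℝ) 1) volume)
    (h9 : IntegrableOn f9 (Ioo (0:ℝ) 1) volume) :
    IntegrableOn (fun u => c1 * f1 u + c2 * f2 u + c3 * f3 u + c4 * f4 u + c5 * f5 u
        + c6 * f6 u + c7 * f7 u + c8 * f8 u + c9 * f9 u + c0) (Ioo (0:ℝ) 1) volume := by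
  have ic : IntegrableOn (fun _ : ℝ => c0) (Ioo (0:ℝ) 1) volume :=
    integrableOn_const volIoo.ne
  exact (((((((((h1.const_mul c1).add (h2.const_mul c2)).add (h3.const_mul c3)).add
    (h4.const_mul c4)).add (h5.const_mul c5)).add (h6.const_mul c6)).add
    (h7.const_mul c7)).add (h8.const_mul c8)).add (h9.const_mul c9)).add ic

theorem statement13
    (μ μF σ σF : ℝ) (hσpos : 0 < σ) (hσFpos : 0 < σF)
    (qF : ℝ → ℝ) (hqF : IsQuantile qF)
    (hqFm : intI qF = μF) (hqF2 : intI (fun u => qF u ^ 2) = μF ^ 2 + σF ^ 2)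
    (γ : ℝ → ℝ) (hγmono : MonotoneOn γ (Ioo (0:ℝ) 1)) (hγsq : SqInt γ)
    (hγ1 : intI γ = 1)
    (σ0 : ℝ) (hσ0 : σ0 = Real.sqrt (intI (fun u => γ u ^ 2) - 1)) (hσ0pos : 0 < σ0)
    (ρ : ℝ) (hρ : ρ = (intI (fun u => γ u * qF u) - μF) / (σ0 * σF))
    (δb : ℝ) (hδb : 0 < δb) (hσpos' : 0 < σ)
    (q : ℝ → ℝ) (hq : MemM μ σ q)
    (heq : intI (fun u => qF u * q u) =
      intI (fun u => qF u * qD μ σ μF σ0 σF ρ δb γ qF u)) :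
    intI (fun u => γ u * q u) ≤
      intI (fun u => γ u * qD μ σ μF σ0 σF ρ δb γ qF u) := by
  obtain ⟨⟨hqmono, hqint, hq2int⟩, hqm, hq2m⟩ := hq
  obtain ⟨hqFmono, hqFint, hqF2int⟩ := hqF
  obtain ⟨hγint, hγ2int⟩ := hγsq
  simp only [intI, qD] at heq hγ1 hqFm hqF2 hρ hσ0 hqm hq2m ⊢
  have hσδdef0 : sigD σ0 σF ρ δb
      = Real.sqrt (σ0 ^ 2 + 4 * δb ^ 2 * σF ^ 2 + 4 * δb * σ0 * σF * ρ) := rfl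
  rw [hσδdef0] at heq ⊢
  set σδ : ℝ := Real.sqrt (σ0 ^ 2 + 4 * δb ^ 2 * σF ^ 2 + 4 * δb * σ0 * σF * ρ) with hσδdef
  set r : ℝ := σ / σδ with hrdef
  -- product integrabilities
  have hγqFi := sqIntMul hγint hγ2int hqFint hqF2int
  have hγqi := sqIntMul hγint hγ2int hqint hq2int
  have hqFqi := sqIntMul hqFint hqF2int hqint hq2int
  -- atomic values
  have vγ2 : (∫ u in Ioo (0:ℝ) 1, γ u ^ 2) = 1 + σ0 ^ 2 := by
    have h0 : (0:ℝ) < (∫ u in Ioo (0:ℝ) 1, γ u ^ 2) - 1 := Real.sqrt_pos.mp (hσ0 ▸ hσ0pos)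
    have h2 := Real.sq_sqrt h0.le
    rw [← hσ0] at h2
    linarith
  have vγqF : (∫ u in Ioo (0:ℝ) 1, γ u * qF u) = μF + ρ * (σ0 * σF) := by
    have hne : σ0 * σF ≠ 0 := by positivity
    rw [eq_div_iff hne] at hρ
    linarith
  set G : ℝ := ∫ u in Ioo (0:ℝ) 1, γ u * q u with hGdef
  set K : ℝ := ∫ u in Ioo (0:ℝ) 1, qF u * q u with hKdef
  -- value of the goal-side integral
  have hGoalval : (∫ u in Ioo (0:ℝ) 1,
        γ u * (μ - r * (1 + 2 * δb * μF) + r * (γ u + 2 * δb * qF u)))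
      = r * (1 + σ0 ^ 2) + (2 * δb * r) * (μF + ρ * (σ0 * σF))
        + (μ - r * (1 + 2 * δb * μF)) := by
    rw [show (fun u => γ u * (μ - r * (1 + 2 * δb * μF) + r * (γ u + 2 * δb * qF u)))
        = (fun u : ℝ => r * (γ u ^ 2) + 0 * (qF u ^ 2) + 0 * (q u ^ 2)
            + (2 * δb * r) * (γ u * qF u) + 0 * (γ u * q u) + 0 * (qF u * q u)
            + (μ - r * (1 + 2 * δb * μF)) * γ u + 0 * qF u + 0 * q u + 0)
      from funext fun u => by ring]
    rw [integral_lin9 _ _ _ _ _ _ _ _ _ _ _ _ _ _ _ _ _ _ _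
      hγ2int hqF2int hq2int hγqFi hγqi hqFqi hγint hqFint hqint, vγ2, vγqF, hγ1]
    ring
  -- value of the qF-side integral (via heq)
  have hKval : K = r * (μF + ρ * (σ0 * σF)) + (2 * δb * r) * (μF ^ 2 + σF ^ 2)
      + (μ - r * (1 + 2 * δb * μF)) * μF := by
    rw [heq]
    rw [show (fun u => qF u * (μ - r * (1 + 2 * δb * μF) + r * (γ u + 2 * δb * qF u)))
        = (fun u : ℝ => 0 * (γ u ^ 2) + (2 * δb * r) * (qF u ^ 2) + 0 * (q u ^ 2)
            + r * (γ u * qF u) + 0 * (γ u * q u) + 0 * (qF u * q u)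
            + 0 * γ u + (μ - r * (1 + 2 * δb * μF)) * qF u + 0 * q u + 0)
      from funext fun u => by ring]
    rw [integral_lin9 _ _ _ _ _ _ _ _ _ _ _ _ _ _ _ _ _ _ _
      hγ2int hqF2int hq2int hγqFi hγqi hqFqi hγint hqFint hqint, vγqF, hqF2, hqFm]
    ring
  -- the centered second moment of γ + 2δ qF
  have hh2val : (∫ u in Ioo (0:ℝ) 1, (γ u + 2 * δb * qF u - (1 + 2 * δb * μF)) ^ 2)
      = σ0 ^ 2 + 4 * δb ^ 2 * σF ^ 2 + 4 * δb * σ0 * σF * ρ := by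
    rw [show (fun u => (γ u + 2 * δb * qF u - (1 + 2 * δb * μF)) ^ 2)
        = (fun u : ℝ => 1 * (γ u ^ 2) + (4 * δb ^ 2) * (qF u ^ 2) + 0 * (q u ^ 2)
            + (4 * δb) * (γ u * qF u) + 0 * (γ u * q u) + 0 * (qF u * q u)
            + (-(2 * (1 + 2 * δb * μF))) * γ u + (-(4 * δb * (1 + 2 * δb * μF))) * qF u
            + 0 * q u + (1 + 2 * δb * μF) ^ 2)
      from funext fun u => by ring]
    rw [integral_lin9 _ _ _ _ _ _ _ _ _ _ _ _ _ _ _ _ _ _ _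
      hγ2int hqF2int hq2int hγqFi hγqi hqFqi hγint hqFint hqint,
      vγ2, vγqF, hqF2, hγ1, hqFm]
    ring
  have hsnn : 0 ≤ σ0 ^ 2 + 4 * δb ^ 2 * σF ^ 2 + 4 * δb * σ0 * σF * ρ := by
    rw [← hh2val]
    exact setIntegral_nonneg measurableSet_Ioo fun u _ => sq_nonneg _
  rw [hGoalval]
  rcases eq_or_lt_of_le hsnn with hs0 | hspos
  · -- degenerate case : σδ = 0
    have hσδ0 : σδ = 0 := by rw [hσδdef, ← hs0, Real.sqrt_zero]
    have hr0 : r = 0 := by rw [hrdef, hσδ0, div_zero]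
    have hK0 : K = μ * μF := by rw [hKval, hr0]; ring
    have hint : IntegrableOn (fun u => (γ u + 2 * δb * qF u - (1 + 2 * δb * μF)) ^ 2)
        (Ioo (0:ℝ) 1) volume := by
      rw [show (fun u => (γ u + 2 * δb * qF u - (1 + 2 * δb * μF)) ^ 2)
          = (fun u : ℝ => 1 * (γ u ^ 2) + (4 * δb ^ 2) * (qF u ^ 2) + 0 * (q u ^ 2)
              + (4 * δb) * (γ u * qF u) + 0 * (γ u * q u) + 0 * (qF u * q u)
              + (-(2 * (1 + 2 * δb * μF))) * γ u + (-(4 * δb * (1 + 2 * δb * μF))) * qF u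
              + 0 * q u + (1 + 2 * δb * μF) ^ 2)
        from funext fun u => by ring]
      exact integrable_lin9 _ _ _ _ _ _ _ _ _ _ _ _ _ _ _ _ _ _ _
        hγ2int hqF2int hq2int hγqFi hγqi hqFqi hγint hqFint hqint
    have hzero : (∫ u in Ioo (0:ℝ) 1, (γ u + 2 * δb * qF u - (1 + 2 * δb * μF)) ^ 2) = 0 := by
      rw [hh2val, ← hs0]
    have hae := (integral_eq_zero_iff_of_nonneg_ae
      (Eventually.of_forall fun u => sq_nonneg _) hint).mp hzero
    have hae2 : (fun u => γ u * q u)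
        =ᵐ[(volume : Measure ℝ).restrict (Ioo (0:ℝ) 1)]
        (fun u => ((1 + 2 * δb * μF) - 2 * δb * qF u) * q u) := by
      filter_upwards [hae] with u hu
      have hu' : (γ u + 2 * δb * qF u - (1 + 2 * δb * μF)) ^ 2 = 0 := hu
      have h0 : γ u + 2 * δb * qF u - (1 + 2 * δb * μF) = 0 := by
        exact pow_eq_zero_iff two_ne_zero |>.mp hu'
      have hγu : γ u = (1 + 2 * δb * μF) - 2 * δb * qF u := by linarith
      rw [hγu]
    have hGval : G = μ := by
      rw [hGdef]
      rw [integral_congr_ae hae2]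
      rw [show (fun u => ((1 + 2 * δb * μF) - 2 * δb * qF u) * q u)
          = (fun u : ℝ => 0 * (γ u ^ 2) + 0 * (qF u ^ 2) + 0 * (q u ^ 2)
              + 0 * (γ u * qF u) + 0 * (γ u * q u) + (-(2 * δb)) * (qF u * q u)
              + 0 * γ u + 0 * qF u + (1 + 2 * δb * μF) * q u + 0)
        from funext fun u => by ring]
      rw [integral_lin9 _ _ _ _ _ _ _ _ _ _ _ _ _ _ _ _ _ _ _
        hγ2int hqF2int hq2int hγqFi hγqi hqFqi hγint hqFint hqint, hqm, ← hKdef, hK0]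
      ring
    rw [hr0, hGval]
    ring_nf
    rfl
  · -- main case : σδ > 0
    have hσδpos : 0 < σδ := by rw [hσδdef]; exact Real.sqrt_pos.mpr hspos
    have hσδsq : σδ ^ 2 = σ0 ^ 2 + 4 * δb ^ 2 * σF ^ 2 + 4 * δb * σ0 * σF * ρ := by
      rw [hσδdef]; exact Real.sq_sqrt hsnn
    have hrσ : r * σδ = σ := by
      rw [hrdef]; field_simp
    have hEval : (∫ u in Ioo (0:ℝ) 1,
          (σδ * (q u - μ) - σ * (γ u + 2 * δb * qF u - (1 + 2 * δb * μF))) ^ 2)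
        = σ ^ 2 * (1 + σ0 ^ 2) + (4 * δb ^ 2 * σ ^ 2) * (μF ^ 2 + σF ^ 2)
          + σδ ^ 2 * (μ ^ 2 + σ ^ 2) + (4 * δb * σ ^ 2) * (μF + ρ * (σ0 * σF))
          + (-(2 * σδ * σ)) * G + (-(4 * δb * σδ * σ)) * K
          + (-(2 * σ * (σ * (1 + 2 * δb * μF) - σδ * μ)))
          + (-(4 * δb * σ * (σ * (1 + 2 * δb * μF) - σδ * μ))) * μF
          + (2 * σδ * (σ * (1 + 2 * δb * μF) - σδ * μ)) * μ
          + (σ * (1 + 2 * δb * μF) - σδ * μ) ^ 2 := by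
      rw [show (fun u => (σδ * (q u - μ) - σ * (γ u + 2 * δb * qF u - (1 + 2 * δb * μF))) ^ 2)
          = (fun u : ℝ => (σ ^ 2) * (γ u ^ 2) + (4 * δb ^ 2 * σ ^ 2) * (qF u ^ 2)
              + (σδ ^ 2) * (q u ^ 2) + (4 * δb * σ ^ 2) * (γ u * qF u)
              + (-(2 * σδ * σ)) * (γ u * q u) + (-(4 * δb * σδ * σ)) * (qF u * q u)
              + (-(2 * σ * (σ * (1 + 2 * δb * μF) - σδ * μ))) * γ u
              + (-(4 * δb * σ * (σ * (1 + 2 * δb * μF) - σδ * μ))) * qF u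
              + (2 * σδ * (σ * (1 + 2 * δb * μF) - σδ * μ)) * q u
              + (σ * (1 + 2 * δb * μF) - σδ * μ) ^ 2)
        from funext fun u => by ring]
      rw [integral_lin9 _ _ _ _ _ _ _ _ _ _ _ _ _ _ _ _ _ _ _
        hγ2int hqF2int hq2int hγqFi hγqi hqFqi hγint hqFint hqint,
        vγ2, vγqF, hqF2, hq2m, hγ1, hqFm, hqm, ← hGdef, ← hKdef]
      ring
    have hE0 : 0 ≤ ∫ u in Ioo (0:ℝ) 1,
        (σδ * (q u - μ) - σ * (γ u + 2 * δb * qF u - (1 + 2 * δb * μF))) ^ 2 :=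
      setIntegral_nonneg measurableSet_Ioo fun u _ => sq_nonneg _
    rw [hEval] at hE0
    have key : 2 * σδ * σ * ((r * (1 + σ0 ^ 2) + (2 * δb * r) * (μF + ρ * (σ0 * σF))
          + (μ - r * (1 + 2 * δb * μF))) - G)
        = σ ^ 2 * (1 + σ0 ^ 2) + (4 * δb ^ 2 * σ ^ 2) * (μF ^ 2 + σF ^ 2)
          + σδ ^ 2 * (μ ^ 2 + σ ^ 2) + (4 * δb * σ ^ 2) * (μF + ρ * (σ0 * σF))
          + (-(2 * σδ * σ)) * G + (-(4 * δb * σδ * σ)) * K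
          + (-(2 * σ * (σ * (1 + 2 * δb * μF) - σδ * μ)))
          + (-(4 * δb * σ * (σ * (1 + 2 * δb * μF) - σδ * μ))) * μF
          + (2 * σδ * (σ * (1 + 2 * δb * μF) - σδ * μ)) * μ
          + (σ * (1 + 2 * δb * μF) - σδ * μ) ^ 2 := by
      linear_combination
        (σ * (2 * (1 + σ0 ^ 2) + 4 * δb * (μF + ρ * σ0 * σF) - 2 * (1 + 2 * δb * μF))
          + 4 * δb * σ * (ρ * σ0 * σF + 2 * δb * σF ^ 2)) * hrσ
        + (-(σ ^ 2)) * hσδsq + (4 * δb * σδ * σ) * hKval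
    have hpos : 0 < 2 * σδ * σ := by positivity
    have hE0' : 0 ≤ 2 * σδ * σ * ((r * (1 + σ0 ^ 2) + (2 * δb * r) * (μF + ρ * (σ0 * σF))
        + (μ - r * (1 + 2 * δb * μF))) - G) := by rw [key]; exact hE0
    have h2 := nonneg_of_mul_nonneg_right hE0' hpos
    linarith
end
end

section
/- (Theorem 4.2, existence of the threshold) Assume σ̂_δ > 0 for all δ ≥ 0, that c(δ) := (∫ q_F r̂_δ − μ_F μ̂_δ)/(σ_F σ̂_δ) is continuous and strictly increasing in δ on (0,∞), that c(δ) → ρ̂ as δ → 0⁺ and c(δ) → 1 as δ → ∞, where ρ̂ := (∫ q_F r̂_0 − μ_F μ̂_0)/(σ_F σ̂_0) < 1. Then for every ε ∈ (ε_min, ε̂_max), where ε̂_max := ε_min + 2σσ_F(1 − ρ̂), there exists a unique δ̂* > 0 with c(δ̂*) = (ε_min + 2σσ_F − ε)/(2σσ_F), and for this δ̂* one has d²(q_F, q̂_{δ̂*}) = ε. -/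
open MeasureTheory Set Filter

noncomputable section

/-- `r` is the isotonic projection of `x` : it is nondecreasing, square-integrable, and satisfies
the variational inequality characterizing the metric projection onto the cone of
nondecreasing square-integrable functions on (0,1). -/
def IsIsoProj (x r : ℝ → ℝ) : Prop :=
  MonotoneOn r (Ioo (0:ℝ) 1) ∧ SqInt r ∧
  ∀ s : ℝ → ℝ, MonotoneOn s (Ioo (0:ℝ) 1) → SqInt s →
    intI (fun u => (x u - r u) * (s u - r u)) ≤ 0

/-- `μ̂ = ∫ r`. -/
def muHat (r : ℝ → ℝ) : ℝ := intI r

/-- `σ̂ = sqrt(∫ r² − (∫ r)²)`. -/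
def sigHat (r : ℝ → ℝ) : ℝ := Real.sqrt (intI (fun u => r u ^ 2) - muHat r ^ 2)

/-- `q̂(u) = μ − (σ/σ̂) μ̂ + (σ/σ̂) r(u)`. -/
def qHat (μ σ : ℝ) (r : ℝ → ℝ) : ℝ → ℝ := fun u =>
  μ - σ / sigHat r * muHat r + σ / sigHat r * r u


lemma intI_add' {f g : ℝ → ℝ} (hf : IntegrableOn f (Ioo (0:ℝ) 1) volume)
    (hg : IntegrableOn g (Ioo (0:ℝ) 1) volume) :
    intI (fun u => f u + g u) = intI f + intI g := integral_add hf hg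

lemma intI_sub' {f g : ℝ → ℝ} (hf : IntegrableOn f (Ioo (0:ℝ) 1) volume)
    (hg : IntegrableOn g (Ioo (0:ℝ) 1) volume) :
    intI (fun u => f u - g u) = intI f - intI g := integral_sub hf hg

lemma intI_cmul' (a : ℝ) (f : ℝ → ℝ) : intI (fun u => a * f u) = a * intI f := by
  simp only [intI, ← smul_eq_mul]
  exact integral_smul a f

lemma intI_const' (a : ℝ) : intI (fun _ => a) = a := by simp [intI]

lemma aux_W2 (μ σ μF σF : ℝ) (qF r : ℝ → ℝ) (hqF : SqInt qF) (hr : SqInt r)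
    (hqFm : intI qF = μF) (hqF2 : intI (fun u => qF u ^ 2) = μF ^ 2 + σF ^ 2)
    (hS : 0 < sigHat r) :
    W2 qF (qHat μ σ r) =
      μ ^ 2 + σ ^ 2 + μF ^ 2 + σF ^ 2 - 2 * μ * μF
        - 2 * (σ / sigHat r) * (intI (fun u => qF u * r u) - μF * muHat r) := by
  have hSne : sigHat r ≠ 0 := ne_of_gt hS
  have harg : 0 < intI (fun u => r u ^ 2) - muHat r ^ 2 :=
    Real.sqrt_pos.mp (by simpa [sigHat] using hS)
  have hS2 : sigHat r ^ 2 = intI (fun u => r u ^ 2) - muHat r ^ 2 := by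
    rw [sigHat, Real.sq_sqrt harg.le]
  have hX2 : intI (fun u => r u ^ 2) = sigHat r ^ 2 + muHat r ^ 2 := by linarith
  have hprod : IntegrableOn (fun u => qF u * r u) (Ioo (0:ℝ) 1) volume := by
    refine Integrable.mono' ((hqF.2.add hr.2).div_const 2)
      (hqF.1.aestronglyMeasurable.mul hr.1.aestronglyMeasurable) ?_
    filter_upwards with u
    rw [Real.norm_eq_abs, abs_mul]
    simp only [Pi.add_apply]
    nlinarith [sq_nonneg (|qF u| - |r u|), sq_abs (qF u), sq_abs (r u)]
  have hfun : (fun u => (qF u - qHat μ σ r u) ^ 2) = fun u =>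
      qF u ^ 2 + (σ / sigHat r) ^ 2 * r u ^ 2
        + (μ - σ / sigHat r * muHat r) ^ 2
        + (2 * (μ - σ / sigHat r * muHat r) * (σ / sigHat r)) * r u
        - (2 * (σ / sigHat r)) * (qF u * r u)
        - (2 * (μ - σ / sigHat r * muHat r)) * qF u := by
    funext u; simp only [qHat]; ring
  have i1 := hqF.2
  have i2 : IntegrableOn (fun u => (σ / sigHat r) ^ 2 * r u ^ 2) (Ioo (0:ℝ) 1) volume :=
    hr.2.const_mul _
  have iconst : IntegrableOn (fun _ : ℝ => (μ - σ / sigHat r * muHat r) ^ 2)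
      (Ioo (0:ℝ) 1) volume := integrableOn_const (by simp) (by simp)
  have i4 : IntegrableOn
      (fun u => (2 * (μ - σ / sigHat r * muHat r) * (σ / sigHat r)) * r u)
      (Ioo (0:ℝ) 1) volume := hr.1.const_mul _
  have i5 : IntegrableOn (fun u => (2 * (σ / sigHat r)) * (qF u * r u))
      (Ioo (0:ℝ) 1) volume := hprod.const_mul _
  have i6 : IntegrableOn (fun u => (2 * (μ - σ / sigHat r * muHat r)) * qF u)
      (Ioo (0:ℝ) 1) volume := hqF.1.const_mul _
  have i12 : IntegrableOn (fun u => qF u ^ 2 + (σ / sigHat r) ^ 2 * r u ^ 2)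
      (Ioo (0:ℝ) 1) volume := i1.add i2
  have i123 : IntegrableOn (fun u => qF u ^ 2 + (σ / sigHat r) ^ 2 * r u ^ 2
      + (μ - σ / sigHat r * muHat r) ^ 2) (Ioo (0:ℝ) 1) volume := i12.add iconst
  have i1234 : IntegrableOn (fun u => qF u ^ 2 + (σ / sigHat r) ^ 2 * r u ^ 2
      + (μ - σ / sigHat r * muHat r) ^ 2
      + (2 * (μ - σ / sigHat r * muHat r) * (σ / sigHat r)) * r u)
      (Ioo (0:ℝ) 1) volume := i123.add i4
  have i12345 : IntegrableOn (fun u => qF u ^ 2 + (σ / sigHat r) ^ 2 * r u ^ 2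
      + (μ - σ / sigHat r * muHat r) ^ 2
      + (2 * (μ - σ / sigHat r * muHat r) * (σ / sigHat r)) * r u
      - (2 * (σ / sigHat r)) * (qF u * r u)) (Ioo (0:ℝ) 1) volume := i1234.sub i5
  rw [W2, hfun,
    intI_sub' i12345 i6,
    intI_sub' i1234 i5,
    intI_add' i123 i4,
    intI_add' i12 iconst,
    intI_add' i1 i2,
    intI_cmul', intI_cmul', intI_cmul', intI_cmul', intI_const', hqFm, hqF2, hX2]
  simp only [muHat]
  field_simp
  ring

theorem statement16
    (μ μF σ σF : ℝ) (hσpos : 0 < σ) (hσFpos : 0 < σF)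
    (qF : ℝ → ℝ) (hqF : IsQuantile qF)
    (hqFm : intI qF = μF) (hqF2 : intI (fun u => qF u ^ 2) = μF ^ 2 + σF ^ 2)
    (εmin : ℝ) (hεmin : εmin = (μF - μ) ^ 2 + (σF - σ) ^ 2)
    (γ : ℝ → ℝ) (hγsq : SqInt γ) (hγ1 : intI γ = 1)
    (rhat : ℝ → ℝ → ℝ)
    (hproj : ∀ δ : ℝ, 0 ≤ δ → IsIsoProj (fun u => γ u + 2 * δ * qF u) (rhat δ))
    (hσh : ∀ δ : ℝ, 0 ≤ δ → 0 < sigHat (rhat δ))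
    (c : ℝ → ℝ)
    (hc : ∀ δ : ℝ, c δ =
      (intI (fun u => qF u * rhat δ u) - μF * muHat (rhat δ)) / (σF * sigHat (rhat δ)))
    (hccont : ContinuousOn c (Ioi 0))
    (hcmono : StrictMonoOn c (Ioi 0))
    (ρh : ℝ) (hρh : ρh = c 0) (hρh1 : ρh < 1)
    (hc0 : Tendsto c (nhdsWithin 0 (Ioi 0)) (nhds ρh))
    (hcinf : Tendsto c atTop (nhds 1))
    (εmaxh : ℝ) (hεmaxh : εmaxh = εmin + 2 * σ * σF * (1 - ρh))
    (ε : ℝ) (hε1 : εmin < ε) (hε2 : ε < εmaxh) :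
    (∃! δh : ℝ, 0 < δh ∧ c δh = (εmin + 2 * σ * σF - ε) / (2 * σ * σF)) ∧
    ∀ δh : ℝ, 0 < δh → c δh = (εmin + 2 * σ * σF - ε) / (2 * σ * σF) →
      W2 qF (qHat μ σ (rhat δh)) = ε := by
  set t : ℝ := (εmin + 2 * σ * σF - ε) / (2 * σ * σF) with ht
  have h2σσF : (0:ℝ) < 2 * σ * σF := by positivity
  have htlt1 : t < 1 := by rw [ht, div_lt_one h2σσF]; linarith
  have hρht : ρh < t := by
    rw [ht, lt_div_iff₀ h2σσF]
    rw [hεmaxh] at hε2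
    nlinarith
  have hev1 : ∀ᶠ δ in nhdsWithin 0 (Ioi (0:ℝ)), c δ < t :=
    hc0.eventually (eventually_lt_nhds hρht)
  obtain ⟨δ1, hδ1lt, hδ1pos⟩ := (hev1.and eventually_mem_nhdsWithin).exists
  have hev2 : ∀ᶠ δ in atTop, t < c δ := hcinf.eventually (eventually_gt_nhds htlt1)
  obtain ⟨δ2, hδ2gt, hδ12⟩ := (hev2.and (eventually_gt_atTop δ1)).exists
  have hsub : Icc δ1 δ2 ⊆ Ioi 0 := fun x hx => lt_of_lt_of_le hδ1pos hx.1
  obtain ⟨δs, hδsmem, hcδs⟩ :=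
    intermediate_value_Icc (le_of_lt hδ12) (hccont.mono hsub)
      ⟨le_of_lt hδ1lt, le_of_lt hδ2gt⟩
  have hδspos : 0 < δs := lt_of_lt_of_le hδ1pos hδsmem.1
  have key : ∀ δh : ℝ, 0 < δh → c δh = t → W2 qF (qHat μ σ (rhat δh)) = ε := by
    intro δh hpos heq
    have hS := hσh δh hpos.le
    have hSne : sigHat (rhat δh) ≠ 0 := ne_of_gt hS
    rw [aux_W2 μ σ μF σF qF (rhat δh) hqF.2 (hproj δh hpos.le).2.1 hqFm hqF2 hS]
    have hIq : intI (fun u => qF u * rhat δh u) - μF * muHat (rhat δh)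
        = t * (σF * sigHat (rhat δh)) := by
      have h0 : (intI (fun u => qF u * rhat δh u) - μF * muHat (rhat δh))
          / (σF * sigHat (rhat δh)) = t := by rw [← hc δh]; exact heq
      exact (div_eq_iff (by positivity)).mp h0
    rw [hIq]
    have hc1 : 2 * (σ / sigHat (rhat δh)) * (t * (σF * sigHat (rhat δh)))
        = 2 * σ * σF * t := by field_simp
    have h2t : 2 * σ * σF * t = εmin + 2 * σ * σF - ε := by
      rw [ht]; field_simp
    rw [hc1, h2t, hεmin]; ring
  refine ⟨⟨δs, ⟨hδspos, hcδs⟩, ?_⟩, key⟩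
  intro y hy
  exact hcmono.injOn (mem_Ioi.mpr hy.1) (mem_Ioi.mpr hδspos) (hy.2.trans hcδs.symm)
end
end

section
/- (Theorem 4.2(i)) Under the hypotheses guaranteeing the threshold δ̂* (σ̂_δ > 0 for all δ ≥ 0; c(δ) := (∫ q_F r̂_δ − μ_F μ̂_δ)/(σ_F σ̂_δ) continuous and strictly increasing on (0,∞) with limits ρ̂ < 1 at 0⁺ and 1 at ∞), let ε ∈ (ε_min, ε̂_max) with ε̂_max := ε_min + 2σσ_F(1 − ρ̂), and let δ̂* > 0 be the unique solution of c(δ̂*) = (ε_min + 2σσ_F − ε)/(2σσ_F). If δ ≥ δ̂*, then q̂_δ ∈ M_ε(μ,σ) and for every q ∈ M_ε(μ,σ), J_δ(q) ≤ μ + σσ̂_δ − δ(ε_min + 2σσ_F), with equality if and only if q = q̂_δ almost everywhere. -/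
open MeasureTheory Set Filter

noncomputable section

/-! ### Auxiliary lemmas -/

section Aux

local notation "ν" => Measure.restrict (volume : Measure ℝ) (Set.Ioo (0:ℝ) 1)

lemma probI : IsProbabilityMeasure ν := by
  constructor
  rw [Measure.restrict_apply_univ, Real.volume_Ioo]
  norm_num

lemma sqInt_iff {f : ℝ → ℝ} : SqInt f ↔ MemLp f 2 ν := by
  constructor
  · rintro ⟨h1, h2⟩
    exact (memLp_two_iff_integrable_sq h1.aestronglyMeasurable).2 h2
  · intro h
    haveI := probI
    exact ⟨h.integrable one_le_two,
      (memLp_two_iff_integrable_sq h.aestronglyMeasurable).1 h⟩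

lemma mulInt {f g : ℝ → ℝ} (hf : MemLp f 2 ν) (hg : MemLp g 2 ν) :
    Integrable (fun u => f u * g u) ν := by
  have h := L2.integrable_inner (𝕜 := ℝ) (hf.toLp f) (hg.toLp g)
  refine h.congr ?_
  filter_upwards [hf.coeFn_toLp, hg.coeFn_toLp] with u h1 h2
  simp [h1, h2, RCLike.inner_apply, conj_trivial, mul_comm]

lemma inner_toLp {f g : ℝ → ℝ} (hf : MemLp f 2 ν) (hg : MemLp g 2 ν) :
    (inner ℝ (hf.toLp f) (hg.toLp g) : ℝ) = ∫ u, f u * g u ∂ν := by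
  rw [L2.inner_def]
  refine integral_congr_ae ?_
  filter_upwards [hf.coeFn_toLp, hg.coeFn_toLp] with u h1 h2
  simp [h1, h2, RCLike.inner_apply, conj_trivial, mul_comm]

lemma norm_toLp_sq {f : ℝ → ℝ} (hf : MemLp f 2 ν) :
    ‖hf.toLp f‖ ^ 2 = ∫ u, f u ^ 2 ∂ν := by
  rw [← real_inner_self_eq_norm_sq, inner_toLp hf hf]
  congr 1; funext u; ring

lemma sq_integrable {f : ℝ → ℝ} (hf : MemLp f 2 ν) :
    Integrable (fun u => f u ^ 2) ν :=
  (memLp_two_iff_integrable_sq hf.aestronglyMeasurable).1 hf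

lemma expand {f g : ℝ → ℝ} (hf : MemLp f 2 ν) (hg : MemLp g 2 ν) (a b c d : ℝ) :
    ∫ u, (a + b * f u) * (c + d * g u) ∂ν =
      a*c + a*d*(∫ u, g u ∂ν) + b*c*(∫ u, f u ∂ν) + b*d*(∫ u, f u * g u ∂ν) := by
  haveI := probI
  have hfi : Integrable f ν := hf.integrable one_le_two
  have hgi : Integrable g ν := hg.integrable one_le_two
  have h1 : Integrable (fun u => a*c + (a*d) * g u) ν :=
    (integrable_const _).add (hgi.const_mul _)
  have h2 : Integrable (fun u => (b*c) * f u) ν := hfi.const_mul _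
  have h3 : Integrable (fun u => (b*d) * (f u * g u)) ν := (mulInt hf hg).const_mul _
  have h12 : Integrable (fun u => (a*c + (a*d) * g u) + (b*c) * f u) ν := h1.add h2
  have key : (fun u => (a + b * f u) * (c + d * g u))
      = fun u => ((a*c + (a*d) * g u) + (b*c) * f u) + (b*d) * (f u * g u) := by
    funext u; ring
  rw [key, integral_add h12 h3, integral_add h1 h2,
    integral_add (integrable_const _) (hgi.const_mul _),
    integral_const_mul (a*d) g, integral_const_mul (b*c) f,
    integral_const_mul (b*d) (fun u => f u * g u), integral_const]
  simp

lemma intI_sub_sq {f g : ℝ → ℝ} (hf : MemLp f 2 ν) (hg : MemLp g 2 ν) :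
    ∫ u, (f u - g u) ^ 2 ∂ν =
      (∫ u, f u ^ 2 ∂ν) - 2*(∫ u, f u * g u ∂ν) + ∫ u, g u ^ 2 ∂ν := by
  have key : (fun u => (f u - g u) ^ 2)
      = fun u => (f u ^ 2 - 2 * (f u * g u)) + g u ^ 2 := by funext u; ring
  have hA : Integrable (fun u => f u ^ 2 - 2 * (f u * g u)) ν :=
    (sq_integrable hf).sub ((mulInt hf hg).const_mul 2)
  rw [key, integral_add hA (sq_integrable hg),
    integral_sub (sq_integrable hf) ((mulInt hf hg).const_mul 2), integral_const_mul]

lemma intI_affine {f : ℝ → ℝ} (hf : Integrable f ν) (a b : ℝ) :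
    ∫ u, (a + b * f u) ∂ν = a + b * ∫ u, f u ∂ν := by
  haveI := probI
  rw [integral_add (integrable_const a) (hf.const_mul b), integral_const_mul, integral_const]
  simp

lemma eq_of_sq_eq {x y : ℝ} (hx : 0 ≤ x) (hy : 0 ≤ y) (h : x ^ 2 = y ^ 2) : x = y := by
  have h4 : (x - y) * (x + y) = 0 := by linear_combination h
  rcases mul_eq_zero.1 h4 with h5 | h5
  · linarith
  · linarith

end Aux

set_option maxHeartbeats 2000000 in
theorem statement17
    (μ μF σ σF : ℝ) (hσpos : 0 < σ) (hσFpos : 0 < σF)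
    (qF : ℝ → ℝ) (hqF : IsQuantile qF)
    (hqFm : intI qF = μF) (hqF2 : intI (fun u => qF u ^ 2) = μF ^ 2 + σF ^ 2)
    (εmin : ℝ) (hεmin : εmin = (μF - μ) ^ 2 + (σF - σ) ^ 2)
    (γ : ℝ → ℝ) (hγsq : SqInt γ) (hγ1 : intI γ = 1)
    (rhat : ℝ → ℝ → ℝ)
    (hproj : ∀ δ : ℝ, 0 ≤ δ → IsIsoProj (fun u => γ u + 2 * δ * qF u) (rhat δ))
    (hσh : ∀ δ : ℝ, 0 ≤ δ → 0 < sigHat (rhat δ))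
    (c : ℝ → ℝ)
    (hc : ∀ δ : ℝ, c δ =
      (intI (fun u => qF u * rhat δ u) - μF * muHat (rhat δ)) / (σF * sigHat (rhat δ)))
    (hccont : ContinuousOn c (Ioi 0))
    (hcmono : StrictMonoOn c (Ioi 0))
    (ρh : ℝ) (hρh : ρh = c 0) (hρh1 : ρh < 1)
    (hc0 : Tendsto c (nhdsWithin 0 (Ioi 0)) (nhds ρh))
    (hcinf : Tendsto c atTop (nhds 1))
    (εmaxh : ℝ) (hεmaxh : εmaxh = εmin + 2 * σ * σF * (1 - ρh))
    (ε : ℝ) (hε1 : εmin < ε) (hε2 : ε < εmaxh)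
    (δh : ℝ) (hδh0 : 0 < δh)
    (hδhc : c δh = (εmin + 2 * σ * σF - ε) / (2 * σ * σF))
    (δ : ℝ) (hδ : δh ≤ δ) :
    (MemM μ σ (qHat μ σ (rhat δ)) ∧ W2 qF (qHat μ σ (rhat δ)) ≤ ε) ∧
    ∀ q : ℝ → ℝ, MemM μ σ q → W2 qF q ≤ ε →
      Jpen γ qF δ q ≤ μ + σ * sigHat (rhat δ) - δ * (εmin + 2 * σ * σF) ∧
      (Jpen γ qF δ q = μ + σ * sigHat (rhat δ) - δ * (εmin + 2 * σ * σF) ↔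
        AeEqI q (qHat μ σ (rhat δ))) := by
  classical
  haveI := probI
  have hδ0 : (0:ℝ) ≤ δ := hδh0.le.trans hδ
  obtain ⟨hrm, hrs, hVI⟩ := hproj δ hδ0
  set ν : Measure ℝ := Measure.restrict (volume : Measure ℝ) (Set.Ioo (0:ℝ) 1) with hνdef
  set r : ℝ → ℝ := rhat δ with hrdef
  -- basic membership facts
  have hγL : MemLp γ 2 ν := sqInt_iff.1 hγsq
  have hqFL : MemLp qF 2 ν := sqInt_iff.1 hqF.2
  have hrL : MemLp r 2 ν := sqInt_iff.1 hrs
  have hxL : MemLp (fun u => γ u + 2*δ*qF u) 2 ν := hγL.add (hqFL.const_mul (2*δ))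
  have hγI : Integrable γ ν := hγL.integrable one_le_two
  have hqFI : Integrable qF ν := hqFL.integrable one_le_two
  have hrI : Integrable r ν := hrL.integrable one_le_two
  have hxI : Integrable (fun u => γ u + 2*δ*qF u) ν := hxL.integrable one_le_two
  have Ir2 : Integrable (fun u => r u ^ 2) ν := sq_integrable hrL
  have Ixr : Integrable (fun u => (γ u + 2*δ*qF u) * r u) ν := mulInt hxL hrL
  have hσhat : 0 < sigHat r := hσh δ hδ0
  have hγ1' : (∫ u, γ u ∂ν) = 1 := hγ1
  have hqFm' : (∫ u, qF u ∂ν) = μF := hqFm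
  have hqF2' : (∫ u, qF u ^ 2 ∂ν) = μF ^ 2 + σF ^ 2 := hqF2
  have hIr : (∫ u, r u ∂ν) = muHat r := rfl
  -- the constants a, b
  obtain ⟨b, hbdef⟩ : ∃ b : ℝ, b = σ / sigHat r := ⟨_, rfl⟩
  obtain ⟨a, hadef⟩ : ∃ a : ℝ, a = μ - b * muHat r := ⟨_, rfl⟩
  have hbσ : b * sigHat r = σ := by rw [hbdef]; exact div_mul_cancel₀ σ hσhat.ne'
  have hb0 : 0 ≤ b := by rw [hbdef]; exact div_nonneg hσpos.le hσhat.le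
  have hqh : qHat μ σ r = fun u => a + b * r u := by
    funext u; rw [hadef, hbdef]; rfl
  -- ∫ x = ∫ r  (from variational inequality with s = r ± 1)
  have hB : (∫ u, (γ u + 2*δ*qF u) ∂ν) = ∫ u, r u ∂ν := by
    have h1 : (∫ u, (γ u + 2*δ*qF u - r u) * ((r u + 1) - r u) ∂ν) ≤ 0 :=
      hVI (fun u => r u + 1) (fun p hp v hv hpv => by
          have := hrm hp hv hpv; show r p + 1 ≤ r v + 1; linarith)
        (sqInt_iff.2 (hrL.add (memLp_const 1)))
    have h2 : (∫ u, (γ u + 2*δ*qF u - r u) * ((r u - 1) - r u) ∂ν) ≤ 0 :=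
      hVI (fun u => r u - 1) (fun p hp v hv hpv => by
          have := hrm hp hv hpv; show r p - 1 ≤ r v - 1; linarith)
        (sqInt_iff.2 (hrL.sub (memLp_const 1)))
    have e1 : (fun u => (γ u + 2*δ*qF u - r u) * ((r u + 1) - r u))
        = fun u => (γ u + 2*δ*qF u) - r u := by funext u; ring
    have e2 : (fun u => (γ u + 2*δ*qF u - r u) * ((r u - 1) - r u))
        = fun u => r u - (γ u + 2*δ*qF u) := by funext u; ring
    rw [e1, integral_sub hxI hrI] at h1
    rw [e2, integral_sub hrI hxI] at h2
    linarith
  -- ∫ x r = ∫ r²  (from variational inequality with s = 0, 2r)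
  have hA : (∫ u, (γ u + 2*δ*qF u) * r u ∂ν) = ∫ u, r u ^ 2 ∂ν := by
    have h1 : (∫ u, (γ u + 2*δ*qF u - r u) * ((2*r u) - r u) ∂ν) ≤ 0 :=
      hVI (fun u => 2*r u)
        (fun p hp v hv hpv => by have := hrm hp hv hpv; show 2*r p ≤ 2*r v; linarith)
        (sqInt_iff.2 (hrL.const_mul 2))
    have h2 : (∫ u, (γ u + 2*δ*qF u - r u) * ((0:ℝ) - r u) ∂ν) ≤ 0 :=
      hVI (fun _ => (0:ℝ)) (fun p hp v hv hpv => le_refl 0)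
        (sqInt_iff.2 (memLp_const 0))
    have e1 : (fun u => (γ u + 2*δ*qF u - r u) * ((2*r u) - r u))
        = fun u => (γ u + 2*δ*qF u) * r u - r u ^ 2 := by funext u; ring
    have e2 : (fun u => (γ u + 2*δ*qF u - r u) * ((0:ℝ) - r u))
        = fun u => r u ^ 2 - (γ u + 2*δ*qF u) * r u := by funext u; ring
    rw [e1, integral_sub Ixr Ir2] at h1
    rw [e2, integral_sub Ir2 Ixr] at h2
    linarith
  -- μ̂ = 1 + 2δ μF
  have hμhat : muHat r = 1 + 2*δ*μF := by
    have h1 : (∫ u, (γ u + 2*δ*qF u) ∂ν) = 1 + 2*δ*μF := by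
      rw [integral_add hγI (hqFI.const_mul (2*δ)), integral_const_mul, hγ1', hqFm']
    rw [← hIr, ← hB, h1]
  -- second moment of r
  have er : (∫ u, r u * r u ∂ν) = ∫ u, r u ^ 2 ∂ν := by
    congr 1; funext u; ring
  have hcent : (∫ u, (r u - muHat r) ^ 2 ∂ν) = (∫ u, r u ^ 2 ∂ν) - muHat r ^ 2 := by
    have e : (fun u => (r u - muHat r) ^ 2)
        = fun u => (-(muHat r) + 1 * r u) * (-(muHat r) + 1 * r u) := by funext u; ring
    rw [e, expand hrL hrL, hIr, er]; ring
  have h0 : 0 ≤ (∫ u, r u ^ 2 ∂ν) - muHat r ^ 2 := by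
    rw [← hcent]; exact integral_nonneg fun u => sq_nonneg _
  have hσh2 : sigHat r ^ 2 = (∫ u, r u ^ 2 ∂ν) - muHat r ^ 2 := Real.sq_sqrt h0
  have hIr2 : (∫ u, r u ^ 2 ∂ν) = muHat r ^ 2 + sigHat r ^ 2 := by linarith
  -- moments of q̂
  have hqhL : MemLp (qHat μ σ r) 2 ν := by
    rw [hqh]; exact (memLp_const a).add (hrL.const_mul b)
  have hIqh1 : (∫ u, qHat μ σ r u ∂ν) = μ := by
    simp only [hqh]
    rw [intI_affine hrI, hIr]
    linear_combination hadef
  have hIqh2 : (∫ u, qHat μ σ r u ^ 2 ∂ν) = μ ^ 2 + σ ^ 2 := by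
    simp only [hqh]
    have e : (fun u => (a + b * r u) ^ 2)
        = fun u => (a + b * r u) * (a + b * r u) := by funext u; ring
    rw [e, expand hrL hrL, hIr, er, hIr2]
    linear_combination (a + b * muHat r + μ) * hadef + (b * sigHat r + σ) * hbσ
  -- ∫ x q̂
  have hxqh : (∫ u, (γ u + 2*δ*qF u) * qHat μ σ r u ∂ν) = μ * muHat r + σ * sigHat r := by
    have e : (fun u => (γ u + 2*δ*qF u) * qHat μ σ r u)
        = fun u => (0 + 1 * (γ u + 2*δ*qF u)) * (a + b * r u) := by
      funext u; simp only [hqh]; ring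
    rw [e, expand hxL hrL, hIr, hB, hIr, hA, hIr2]
    linear_combination (muHat r) * hadef + (sigHat r) * hbσ
  -- general formula for J
  have hJform : ∀ p : ℝ → ℝ, MemLp p 2 ν → (∫ u, p u ∂ν) = μ →
      (∫ u, p u ^ 2 ∂ν) = μ ^ 2 + σ ^ 2 →
      Jpen γ qF δ p = (∫ u, (γ u + 2*δ*qF u) * p u ∂ν) - δ*(μF^2+σF^2+μ^2+σ^2) := by
    intro p hpL hpm hp2
    have hW : W2 qF p = (μF^2+σF^2) - 2*(∫ u, qF u * p u ∂ν) + (μ^2+σ^2) := by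
      show (∫ u, (qF u - p u) ^ 2 ∂ν) = _
      rw [intI_sub_sq hqFL hpL, hqF2', hp2]
    have hsplit : (∫ u, (γ u + 2*δ*qF u) * p u ∂ν)
        = (∫ u, γ u * p u ∂ν) + 2*δ*(∫ u, qF u * p u ∂ν) := by
      have h1 : (fun u => (γ u + 2*δ*qF u) * p u)
          = fun u => γ u * p u + (2*δ)*(qF u * p u) := by funext u; ring
      rw [h1, integral_add (mulInt hγL hpL) ((mulInt hqFL hpL).const_mul _), integral_const_mul]
    show (∫ u, γ u * p u ∂ν) - δ * W2 qF p = _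
    rw [hW, hsplit]; ring
  -- the bound constant
  have hbound : μ * muHat r + σ * sigHat r - δ*(μF^2+σF^2+μ^2+σ^2)
      = μ + σ * sigHat r - δ * (εmin + 2*σ*σF) := by
    rw [hεmin, hμhat]; ring
  -- value of J at q̂
  have hJhat : Jpen γ qF δ (qHat μ σ r) = μ + σ * sigHat r - δ * (εmin + 2*σ*σF) := by
    rw [hJform (qHat μ σ r) hqhL hIqh1 hIqh2, hxqh]
    exact hbound
  -- W2 between qF and q̂
  have hqFr : (∫ u, qF u * r u ∂ν) = μF * muHat r + c δ * (σF * sigHat r) := by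
    have h' : c δ * (σF * sigHat r) = (∫ u, qF u * r u ∂ν) - μF * muHat r := by
      rw [hc δ]
      exact div_mul_cancel₀ _ (ne_of_gt (mul_pos hσFpos hσhat))
    linarith
  have hqFqh : (∫ u, qF u * qHat μ σ r u ∂ν)
      = a * μF + b * (∫ u, qF u * r u ∂ν) := by
    have e : (fun u => qF u * qHat μ σ r u)
        = fun u => (0 + 1 * qF u) * (a + b * r u) := by
      funext u; simp only [hqh]; ring
    rw [e, expand hqFL hrL, hqFm', hIr]
    ring
  have hW2hat : (∫ u, (qF u - qHat μ σ r u) ^ 2 ∂ν) = εmin + 2*σ*σF*(1 - c δ) := by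
    rw [intI_sub_sq hqFL hqhL, hqF2', hIqh2, hqFqh, hqFr, hεmin]
    linear_combination (-2*μF) * hadef + (-2*(c δ)*σF) * hbσ
  -- monotonicity of c gives the constraint
  have hcc : c δh ≤ c δ := by
    rcases eq_or_lt_of_le hδ with h | h
    · rw [h]
    · exact (hcmono (mem_Ioi.mpr hδh0) (mem_Ioi.mpr (hδh0.trans_le hδ)) h).le
  have hcval : 2*σ*σF * c δh = εmin + 2*σ*σF - ε := by
    rw [hδhc]; field_simp
  have hW2ε : (∫ u, (qF u - qHat μ σ r u) ^ 2 ∂ν) ≤ ε := by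
    rw [hW2hat]
    have hpos : (0:ℝ) ≤ 2*σ*σF := by positivity
    have hcc' := mul_le_mul_of_nonneg_left hcc hpos
    linarith [hcc', hcval]
  -- monotonicity of q̂
  have hqhmono : MonotoneOn (qHat μ σ r) (Ioo (0:ℝ) 1) := by
    rw [hqh]; intro p hp v hv hpv
    have h := hrm hp hv hpv
    have h2 : b * r p ≤ b * r v := mul_le_mul_of_nonneg_left h hb0
    show a + b * r p ≤ a + b * r v
    linarith
  refine ⟨⟨⟨⟨hqhmono, sqInt_iff.2 hqhL⟩, hIqh1, hIqh2⟩, hW2ε⟩, ?_⟩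
  -- now the main bound
  intro q hqM hqW
  obtain ⟨⟨hqmono, hqsq⟩, hqm, hq2⟩ := hqM
  have hqL : MemLp q 2 ν := sqInt_iff.1 hqsq
  have hqm' : (∫ u, q u ∂ν) = μ := hqm
  have hq2' : (∫ u, q u ^ 2 ∂ν) = μ ^ 2 + σ ^ 2 := hq2
  have Ixq : Integrable (fun u => (γ u + 2*δ*qF u) * q u) ν := mulInt hxL hqL
  have Irq : Integrable (fun u => r u * q u) ν := mulInt hrL hqL
  -- ∫ x q ≤ ∫ r q
  have hC : (∫ u, (γ u + 2*δ*qF u) * q u ∂ν) ≤ ∫ u, r u * q u ∂ν := by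
    have h : (∫ u, (γ u + 2*δ*qF u - r u) * (q u - r u) ∂ν) ≤ 0 := hVI q hqmono hqsq
    have e : (fun u => (γ u + 2*δ*qF u - r u) * (q u - r u))
        = fun u => ((γ u + 2*δ*qF u) * q u - (γ u + 2*δ*qF u) * r u)
            - (r u * q u - r u ^ 2) := by funext u; ring
    have hI1 : Integrable (fun u => (γ u + 2*δ*qF u) * q u - (γ u + 2*δ*qF u) * r u) ν :=
      Ixq.sub Ixr
    have hI2 : Integrable (fun u => r u * q u - r u ^ 2) ν := Irq.sub Ir2
    rw [e, integral_sub hI1 hI2, integral_sub Ixq Ixr,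
      integral_sub Irq Ir2] at h
    linarith
  -- Cauchy–Schwarz setup
  have hGL : MemLp (fun u => r u - muHat r) 2 ν := hrL.sub (memLp_const _)
  have hFL : MemLp (fun u => q u - μ) 2 ν := hqL.sub (memLp_const _)
  have hGF : (inner ℝ (hGL.toLp _) (hFL.toLp _) : ℝ)
      = (∫ u, r u * q u ∂ν) - muHat r * μ := by
    rw [inner_toLp]
    have e : (fun u => (r u - muHat r) * (q u - μ))
        = fun u => (-(muHat r) + 1 * r u) * (-μ + 1 * q u) := by funext u; ring
    rw [e, expand hrL hqL, hIr, hqm']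
    ring
  have hnG : ‖hGL.toLp _‖ = sigHat r := by
    refine eq_of_sq_eq (norm_nonneg _) hσhat.le ?_
    rw [norm_toLp_sq hGL, hcent, hσh2]
  have hnF : ‖hFL.toLp _‖ = σ := by
    refine eq_of_sq_eq (norm_nonneg _) hσpos.le ?_
    rw [norm_toLp_sq hFL]
    have e : (fun u => (q u - μ) ^ 2)
        = fun u => (-μ + 1 * q u) * (-μ + 1 * q u) := by funext u; ring
    rw [e, expand hqL hqL, hqm']
    have eq' : (∫ u, q u * q u ∂ν) = ∫ u, q u ^ 2 ∂ν := by congr 1; funext u; ring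
    rw [eq', hq2']; ring
  have hCS : (inner ℝ (hGL.toLp _) (hFL.toLp _) : ℝ) ≤ σ * sigHat r := by
    calc (inner ℝ (hGL.toLp _) (hFL.toLp _) : ℝ) ≤ ‖hGL.toLp _‖ * ‖hFL.toLp _‖ :=
          real_inner_le_norm _ _
      _ = σ * sigHat r := by rw [hnG, hnF]; ring
  have hJq : Jpen γ qF δ q
      = (∫ u, (γ u + 2*δ*qF u) * q u ∂ν) - δ*(μF^2+σF^2+μ^2+σ^2) :=
    hJform q hqL hqm' hq2'
  constructor
  · rw [hJq]
    linarith [hC, hGF, hCS, hbound]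
  constructor
  · -- equality implies a.e. equality with q̂
    intro hEq
    rw [hJq] at hEq
    have h1 : (∫ u, (γ u + 2*δ*qF u) * q u ∂ν) = μ * muHat r + σ * sigHat r := by
      linarith [hbound]
    have h2 : (inner ℝ (hGL.toLp _) (hFL.toLp _) : ℝ) = sigHat r * σ := by
      have hge : sigHat r * σ ≤ (inner ℝ (hGL.toLp _) (hFL.toLp _) : ℝ) := by
        linarith [hC, hGF, h1]
      linarith [hCS, hge]
    have h3 : ‖hFL.toLp _‖ • (hGL.toLp (fun u => r u - muHat r))
        = ‖hGL.toLp _‖ • (hFL.toLp (fun u => q u - μ)) := by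
      apply inner_eq_norm_mul_iff_real.1
      rw [hnG, hnF]
      linarith [h2]
    rw [hnG, hnF] at h3
    have h4 : (σ • hGL.toLp (fun u => r u - muHat r) : Lp ℝ 2 ν)
        =ᵐ[ν] (sigHat r • hFL.toLp (fun u => q u - μ) : Lp ℝ 2 ν) := by
      rw [h3]
    show q =ᵐ[ν] qHat μ σ r
    filter_upwards [h4, Lp.coeFn_smul σ (hGL.toLp (fun u => r u - muHat r)),
      Lp.coeFn_smul (sigHat r) (hFL.toLp (fun u => q u - μ)),
      hGL.coeFn_toLp, hFL.coeFn_toLp] with u e1 e2 e3 e4 e5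
    have key : σ * (r u - muHat r) = sigHat r * (q u - μ) := by
      have h5 := e1
      rw [e2, e3] at h5
      simpa [e4, e5] using h5
    rw [hqh]
    dsimp only
    rw [hadef, hbdef]
    have hne : sigHat r ≠ 0 := ne_of_gt hσhat
    field_simp
    linarith [key]
  · -- a.e. equality implies equality of values
    intro hae
    have hae' : q =ᵐ[ν] qHat μ σ r := hae
    have e1 : (∫ u, γ u * q u ∂ν) = ∫ u, γ u * qHat μ σ r u ∂ν := by
      refine integral_congr_ae ?_
      filter_upwards [hae'] with u h; rw [h]
    have e2 : (∫ u, (qF u - q u) ^ 2 ∂ν) = ∫ u, (qF u - qHat μ σ r u) ^ 2 ∂ν := by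
      refine integral_congr_ae ?_
      filter_upwards [hae'] with u h; rw [h]
    have : Jpen γ qF δ q = Jpen γ qF δ (qHat μ σ r) := by
      simp only [Jpen, W2, intI]
      rw [e1, e2]
    rw [this, hJhat]
end
end
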